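/- arXiv:2301.01152 — 9 statements merged into one kernel-verified Lean document; each statement's English description precedes it below -/
import Mathlib

section
/- In the king graph on an n×n board with n even, every induced path has length at most n²/2 − 1 (equivalently, visits at most n²/2 vertices). -/
open SimpleGraph

abbrev Cell : Type := ℤ × ℤ

def sqBoard (n : ℕ) : Set Cell :=
  {a | 0 ≤ a.1 ∧ a.1 ≤ (n : ℤ) - 1 ∧ 0 ≤ a.2 ∧ a.2 ≤ (n : ℤ) - 1}

/-- The king graph on the standard `n × n` board. -/
def kingGraph (n : ℕ) : SimpleGraph Cell where
  Adj a b := a ≠ b ∧ a ∈ sqBoard n ∧ b ∈ sqBoard n ∧ |a.1 - b.1| ≤ 1 ∧ |a.2 - b.2| ≤ 1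
  symm := by
    constructor
    rintro a b ⟨h1, h2, h3, h4, h5⟩
    exact ⟨h1.symm, h3, h2, by rwa [abs_sub_comm], by rwa [abs_sub_comm]⟩
  loopless := by constructor; rintro a ⟨h, -⟩; exact h rfl

def board (m n : ℕ) : Set Cell :=
  {a | 0 ≤ a.1 ∧ a.1 ≤ (n : ℤ) - 1 ∧ 0 ≤ a.2 ∧ a.2 ≤ (m : ℤ) - 1}

/-- The grid graph on the standard `m × n` board (m rows, n columns). -/
def gridGraph (m n : ℕ) : SimpleGraph Cell where
  Adj a b := a ∈ board m n ∧ b ∈ board m n ∧ |a.1 - b.1| + |a.2 - b.2| = 1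
  symm := by
    constructor
    rintro a b ⟨h1, h2, h3⟩
    refine ⟨h2, h1, ?_⟩
    rw [abs_sub_comm b.1 a.1, abs_sub_comm b.2 a.2]
    exact h3
  loopless := by constructor; rintro a ⟨-, -, h⟩; simp at h

/-- A snake path: a path which is an induced subgraph. -/
def IsSnake {V : Type*} (G : SimpleGraph V) {a b : V} (p : G.Walk a b) : Prop :=
  p.IsPath ∧ ∀ u ∈ p.support, ∀ v ∈ p.support, G.Adj u v → s(u, v) ∈ p.edges

/-- The walk `p` makes a turn at `c` : it traverses a horizontal and a vertical edge at `c`. -/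
def TurnsAt {G : SimpleGraph Cell} {a b : Cell} (p : G.Walk a b) (c : Cell) : Prop :=
  ∃ u v : Cell, u ≠ v ∧ s(u, c) ∈ p.edges ∧ s(c, v) ∈ p.edges ∧
    ((u.2 = c.2 ∧ v.1 = c.1) ∨ (u.1 = c.1 ∧ v.2 = c.2))

noncomputable def turnCount {G : SimpleGraph Cell} {a b : Cell} (p : G.Walk a b) : ℕ :=
  Set.ncard {c : Cell | TurnsAt p c}

/-- The walk `p` goes straight through `c`. -/
def GoesStraight {G : SimpleGraph Cell} {a b : Cell} (p : G.Walk a b) (c : Cell) : Prop :=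
  ∃ u v : Cell, u ≠ v ∧ s(u, c) ∈ p.edges ∧ s(c, v) ∈ p.edges ∧
    ((u.2 = c.2 ∧ v.2 = c.2) ∨ (u.1 = c.1 ∧ v.1 = c.1))

/-- `p` is a Hamiltonian path on the vertex set `S`. -/
def IsHamOn {V : Type*} {G : SimpleGraph V} (S : Set V) {a b : V} (p : G.Walk a b) : Prop :=
  p.IsPath ∧ ∀ v, v ∈ S ↔ v ∈ p.support

/-- The 4-cycle `a'—a''—b'—b''—a'` of the grid graph is free relative to `p`. -/
def FreeCycle {k : ℕ} {a b : Cell} (p : (gridGraph k k).Walk a b)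
    (a' a'' b' b'' : Cell) : Prop :=
  (gridGraph k k).Adj a' a'' ∧ (gridGraph k k).Adj a'' b' ∧
  (gridGraph k k).Adj b' b'' ∧ (gridGraph k k).Adj b'' a' ∧
  s(a', a'') ∈ p.edges ∧ s(a'', b') ∉ p.edges ∧
  s(b', b'') ∉ p.edges ∧ s(b'', a') ∉ p.edges ∧
  GoesStraight p a' ∧ GoesStraight p a'' ∧ TurnsAt p b' ∧ TurnsAt p b''

/-!
Cut the board into `(n/2)²` blocks of `2 × 2` cells. Each block is a clique of the king graph,
and an induced path meets a clique in at most two vertices, since three of them would span a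
triangle of path edges. Hence the path has at most `n²/2` vertices.
-/

namespace SimpleGraph

variable {V : Type*} {G : SimpleGraph V}

theorem Walk.IsPath.not_triangle {a b : V} {p : G.Walk a b} (hp : p.IsPath) {u v w : V}
    (huv : u ≠ v) (hvw : v ≠ w) (huw : u ≠ w)
    (huv' : s(u, v) ∈ p.edges) (hvw' : s(v, w) ∈ p.edges) (huw' : s(u, w) ∈ p.edges) : False := by
  induction p with
  | nil => simp at huv'
  | @cons x y z h q ih =>
    rw [Walk.cons_isPath_iff] at hp
    simp only [Walk.edges_cons, List.mem_cons, Sym2.eq_iff] at huv' hvw' huw'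
    have hx₁ : ∀ t, s(x, t) ∉ q.edges := fun _ ht ↦ hp.2 (q.fst_mem_support_of_mem_edges ht)
    have hx₂ : ∀ t, s(t, x) ∉ q.edges := fun _ ht ↦ hp.2 (q.snd_mem_support_of_mem_edges ht)
    grind

theorem IsSnake.card_le_two_of_isClique {a b : V} {p : G.Walk a b} (hp : IsSnake G p)
    {t : Finset V} (hsupp : ∀ v ∈ t, v ∈ p.support) (ht : G.IsClique (t : Set V)) :
    t.card ≤ 2 := by
  by_contra! h
  obtain ⟨u, hu, v, hv, w, hw, huv, huw, hvw⟩ := Finset.two_lt_card.mp h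
  have edge {x y : V} (hx : x ∈ t) (hy : y ∈ t) (hxy : x ≠ y) : s(x, y) ∈ p.edges :=
    hp.2 x (hsupp x hx) y (hsupp y hy) (ht hx hy hxy)
  exact hp.1.not_triangle huv hvw huw (edge hu hv huv) (edge hv hw hvw) (edge hu hw huw)

end SimpleGraph

theorem kingGraph.mem_sqBoard_of_mem_support {n : ℕ} {a b v : Cell}
    {p : (kingGraph n).Walk a b} (hp : ¬p.Nil) (hv : v ∈ p.support) : v ∈ sqBoard n := by
  obtain ⟨e, he, hve⟩ := (Walk.mem_support_iff_exists_mem_edges_of_not_nil hp).mp hv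
  induction e using Sym2.ind with
  | h x y =>
    obtain ⟨-, hx, hy, -⟩ := p.adj_of_mem_edges he
    rcases Sym2.mem_iff.mp hve with rfl | rfl
    exacts [hx, hy]

def block (c : Cell) : Cell := (c.1 / 2, c.2 / 2)

theorem kingGraph.adj_of_block_eq {n : ℕ} {c d : Cell} (hc : c ∈ sqBoard n)
    (hd : d ∈ sqBoard n) (hcd : c ≠ d) (h : block c = block d) : (kingGraph n).Adj c d := by
  simp only [block, Prod.mk.injEq] at h
  refine ⟨hcd, hc, hd, ?_, ?_⟩ <;> rw [abs_le] <;> omega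

theorem block_mem_of_mem_sqBoard {m : ℕ} {c : Cell} (hc : c ∈ sqBoard (m + m)) :
    block c ∈ Finset.Icc 0 ((m : ℤ) - 1) ×ˢ Finset.Icc 0 ((m : ℤ) - 1) := by
  obtain ⟨h₁, h₂, h₃, h₄⟩ := hc
  simp only [block, Finset.mem_product, Finset.mem_Icc]
  push_cast at h₂ h₄
  omega

theorem IsSnake.card_filter_block_le_two {n : ℕ} {a b : Cell} {p : (kingGraph n).Walk a b}
    (hp : IsSnake (kingGraph n) p) (hnil : ¬p.Nil) (B : Cell) :
    {v ∈ p.support.toFinset | block v = B}.card ≤ 2 := by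
  refine hp.card_le_two_of_isClique (fun v hv ↦ ?_) (fun c hc d hd hcd ↦ ?_)
  · exact List.mem_toFinset.mp (Finset.mem_filter.mp hv).1
  · simp only [Finset.coe_filter, List.mem_toFinset, Set.mem_ofPred_eq] at hc hd
    exact kingGraph.adj_of_block_eq (kingGraph.mem_sqBoard_of_mem_support hnil hc.1)
      (kingGraph.mem_sqBoard_of_mem_support hnil hd.1) hcd (hc.2.trans hd.2.symm)

theorem king_even_upper_general (n : ℕ) (hn : Even n)
    {a b : Cell} (p : (kingGraph n).Walk a b) (hp : IsSnake (kingGraph n) p) :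
    p.length ≤ n ^ 2 / 2 - 1 := by
  by_cases hnil : p.Nil
  · simp [Walk.length_eq_zero_iff.mpr hnil]
  obtain ⟨m, rfl⟩ := hn
  have hboard {v : Cell} (hv : v ∈ p.support.toFinset) : v ∈ sqBoard (m + m) :=
    kingGraph.mem_sqBoard_of_mem_support hnil (List.mem_toFinset.mp hv)
  have hcard := Finset.card_le_mul_card_image_of_maps_to
    (fun v hv ↦ block_mem_of_mem_sqBoard (hboard hv)) 2
    (fun B _ ↦ hp.card_filter_block_le_two hnil B)
  rw [List.toFinset_card_of_nodup hp.1.support_nodup, Walk.length_support,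
    Finset.card_product, Int.card_Icc, sub_add_cancel, sub_zero, Int.toNat_natCast] at hcard
  have hsq : (m + m) ^ 2 / 2 = 2 * (m * m) := by
    rw [show (m + m) ^ 2 = 2 * (m * m) * 2 by ring, Nat.mul_div_cancel _ two_pos]
  omega

/-- In the king graph on an n×n board with n even, every induced path
has length at most n²/2 − 1. -/
theorem king_even_upper (n : ℕ) (hn : Even n) (h0 : 0 < n)
    {a b : Cell} (p : (kingGraph n).Walk a b) (hp : IsSnake (kingGraph n) p) :
    p.length ≤ n ^ 2 / 2 - 1 :=
  king_even_upper_general n hn p hp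
end

section
/- For every even positive integer n, the king graph on an n×n board contains an induced path of length n²/2 − 1. -/
/-!
For even `n ≥ 8`, a snake of `n²/2` cells from `(0, 0)` to `(n - 1, 0)` is built from the one
for `n - 4`: go up the left column, along the top row and down the right column to
`(n - 1, 3)`, step diagonally to `(n - 2, 2)`, run through the smaller snake backwards after
shifting it by `(2, 2)`, and leave through `(2, 1)` along the bottom row to `(n - 1, 0)`.
The frame adds `4n - 8 = (n² - (n - 4)²) / 2` cells. The only possible chords are at the two
junctions, and they are ruled out by asking the smaller snake to avoid the cells `(1, 0)` and
`(n - 1, 1)`, which the new snake again avoids. The cases `n = 4, 6` are checked directly.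
-/

open SimpleGraph

namespace SimpleGraph

variable {V W : Type*} (G : SimpleGraph V) {H : SimpleGraph W}

def Apart (a b : V) : Prop := a ≠ b ∧ ¬G.Adj a b

def IsSnakeList : List V → Prop
  | a :: b :: l => G.Adj a b ∧ (∀ c ∈ l, G.Apart a c) ∧ IsSnakeList (b :: l)
  | _ => True

instance [DecidableEq V] [DecidableRel G.Adj] : DecidableRel G.Apart :=
  fun _ _ => inferInstanceAs (Decidable (_ ∧ _))

def decidableIsSnakeList [DecidableEq V] [DecidableRel G.Adj] :
    ∀ l : List V, Decidable (G.IsSnakeList l)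
  | [] => isTrue trivial
  | [_] => isTrue trivial
  | _ :: b :: l =>
    haveI := decidableIsSnakeList (b :: l)
    inferInstanceAs (Decidable (_ ∧ _ ∧ _))

instance [DecidableEq V] [DecidableRel G.Adj] : DecidablePred G.IsSnakeList :=
  decidableIsSnakeList G

variable {G}

theorem Apart.symm {a b : V} (h : G.Apart a b) : G.Apart b a :=
  ⟨h.1.symm, fun h' => h.2 h'.symm⟩

theorem isSnakeList_singleton (a : V) : G.IsSnakeList [a] := trivial

theorem isSnakeList_cons_cons {a b : V} {l : List V} :
    G.IsSnakeList (a :: b :: l) ↔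
      G.Adj a b ∧ (∀ c ∈ l, G.Apart a c) ∧ G.IsSnakeList (b :: l) :=
  Iff.rfl

theorem IsSnakeList.tail {a : V} : ∀ {l : List V}, G.IsSnakeList (a :: l) → G.IsSnakeList l
  | [], _ => trivial
  | _ :: _, h => (isSnakeList_cons_cons.1 h).2.2

theorem IsSnakeList.nodup : ∀ {l : List V}, G.IsSnakeList l → l.Nodup
  | [], _ => List.nodup_nil
  | [_], _ => List.nodup_singleton _
  | a :: b :: l, h => by
    obtain ⟨hab, hl, h⟩ := isSnakeList_cons_cons.1 h
    refine List.nodup_cons.2 ⟨?_, h.nodup⟩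
    rintro (_ | ⟨_, hc⟩)
    exacts [hab.ne rfl, (hl a hc).1 rfl]

theorem IsSnakeList.append {a b : V} : ∀ {l₁ l₂ : List V}, G.IsSnakeList l₁ →
    G.IsSnakeList l₂ → l₁.getLast? = some a → l₂.head? = some b → G.Adj a b →
    (∀ x ∈ l₁, ∀ c ∈ l₂, G.Apart x c ∨ x = a ∧ c = b) → G.IsSnakeList (l₁ ++ l₂)
  | [], _, _, _, ha, _, _, _ => nomatch ha
  | _, [], _, _, _, hb, _, _ => nomatch hb
  | [x], y :: l₂, _, h₂, ha, hb, hab, hsep => by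
    obtain rfl : x = a := Option.some_inj.1 ha
    obtain rfl : y = b := Option.some_inj.1 hb
    refine ⟨hab, fun c hc => ?_, h₂⟩
    refine (hsep x (.head _) c (.tail y hc)).resolve_right fun ⟨_, hcb⟩ => ?_
    exact (List.nodup_cons.1 h₂.nodup).1 (hcb ▸ hc)
  | x :: x' :: l₁, l₂, h₁, h₂, ha, hb, hab, hsep => by
    obtain ⟨hxx', hl₁, h₁'⟩ := isSnakeList_cons_cons.1 h₁
    rw [List.getLast?_cons_cons] at ha
    refine ⟨hxx', fun c hc => ?_, h₁'.append h₂ ha hb hab fun y hy c hc => hsep y (.tail x hy) c hc⟩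
    rcases List.mem_append.1 hc with hc | hc
    · exact hl₁ c hc
    refine (hsep x (.head _) c hc).resolve_right fun ⟨hxa, _⟩ => ?_
    exact (List.nodup_cons.1 h₁.nodup).1 (hxa ▸ List.mem_of_getLast? ha)

theorem IsSnakeList.reverse : ∀ {l : List V}, G.IsSnakeList l → G.IsSnakeList l.reverse
  | [], _ => trivial
  | [_], _ => trivial
  | a :: b :: l, h => by
    rw [List.reverse_cons]
    refine h.tail.reverse.append trivial (by simp) rfl h.1.symm fun x hx c hc => ?_
    rw [List.mem_singleton.1 hc]
    rcases List.mem_cons.1 (List.mem_reverse.1 hx) with rfl | hx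
    · exact .inr ⟨rfl, rfl⟩
    · exact .inl (h.2.1 x hx).symm

theorem IsSnakeList.map (f : G ↪g H) : ∀ {l : List V}, G.IsSnakeList l →
    H.IsSnakeList (l.map f)
  | [], _ => trivial
  | [_], _ => trivial
  | a :: b :: l, h => by
    obtain ⟨hab, hl, h⟩ := isSnakeList_cons_cons.1 h
    refine ⟨f.map_adj_iff.2 hab, ?_, h.map f⟩
    simp only [List.mem_map, forall_exists_index, and_imp, forall_apply_eq_imp_iff₂]
    exact fun c hc => ⟨f.injective.ne (hl c hc).1, mt f.map_adj_iff.1 (hl c hc).2⟩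

theorem IsSnakeList.of_le {G' : SimpleGraph V} (hle : G' ≤ G) :
    ∀ {l : List V}, G.IsSnakeList l → (∀ x ∈ l, ∀ y ∈ l, G.Adj x y → G'.Adj x y) →
    G'.IsSnakeList l
  | [], _, _ => trivial
  | [_], _, _ => trivial
  | a :: b :: l, h, hadj => by
    obtain ⟨hab, hl, h⟩ := isSnakeList_cons_cons.1 h
    exact ⟨hadj a (.head _) b (.tail _ (.head _)) hab,
      fun c hc => ⟨(hl c hc).1, fun h' => (hl c hc).2 (hle h')⟩,
      h.of_le hle fun x hx y hy => hadj x (.tail _ hx) y (.tail _ hy)⟩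

theorem isSnake_cons {a b c : V} (hab : G.Adj a b) {p : G.Walk b c} (hp : IsSnake G p)
    (ha : a ∉ p.support) (hchord : ∀ x ∈ p.support, G.Adj a x → x = b) :
    IsSnake G (.cons hab p) := by
  refine ⟨hp.1.cons ha, ?_⟩
  simp only [Walk.support_cons, Walk.edges_cons, List.mem_cons]
  rintro u (rfl | hu) v (rfl | hv) huv
  · exact absurd huv (G.loopless.irrefl _)
  · exact .inl (by rw [hchord v hv huv])
  · exact .inl (by rw [hchord u hu huv.symm, Sym2.eq_swap])
  · exact .inr (hp.2 u hu v hv huv)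

theorem IsSnakeList.exists_walk : ∀ {a : V} {l : List V}, G.IsSnakeList (a :: l) →
    ∃ (b : V) (p : G.Walk a b), p.support = a :: l ∧ IsSnake G p
  | a, [], _ => ⟨a, .nil, rfl, .nil, by simp⟩
  | a, b :: l, h => by
    obtain ⟨c, p, hsupp, hp⟩ := h.2.2.exists_walk
    refine ⟨c, .cons h.1 p, by rw [Walk.support_cons, hsupp], isSnake_cons _ hp ?_ ?_⟩ <;>
      rw [hsupp]
    · exact (List.nodup_cons.1 h.nodup).1
    · rintro x (_ | ⟨_, hx⟩) hax
      · rfl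
      · exact absurd hax (h.2.1 x hx).2

end SimpleGraph

def kingPlane : SimpleGraph Cell where
  Adj a b := a ≠ b ∧ |a.1 - b.1| ≤ 1 ∧ |a.2 - b.2| ≤ 1
  symm := ⟨fun a b ⟨h, h₁, h₂⟩ => ⟨h.symm, by rwa [abs_sub_comm], by rwa [abs_sub_comm]⟩⟩
  loopless := ⟨fun _ h => h.1 rfl⟩

namespace kingPlane

theorem adj_iff {a b : Cell} :
    kingPlane.Adj a b ↔ a ≠ b ∧ |a.1 - b.1| ≤ 1 ∧ |a.2 - b.2| ≤ 1 :=
  Iff.rfl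

instance : DecidableRel kingPlane.Adj := fun _ _ => decidable_of_iff' _ adj_iff

theorem adj_iff_le {a b : Cell} : kingPlane.Adj a b ↔ (a.1 ≠ b.1 ∨ a.2 ≠ b.2) ∧
    a.1 ≤ b.1 + 1 ∧ b.1 ≤ a.1 + 1 ∧ a.2 ≤ b.2 + 1 ∧ b.2 ≤ a.2 + 1 := by
  simp only [adj_iff, Ne, Prod.ext_iff, abs_le]
  omega

theorem apart_iff {a b : Cell} : kingPlane.Apart a b ↔
    a.1 + 2 ≤ b.1 ∨ b.1 + 2 ≤ a.1 ∨ a.2 + 2 ≤ b.2 ∨ b.2 + 2 ≤ a.2 := by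
  simp only [Apart, adj_iff_le, Ne, Prod.ext_iff]
  omega

def translate (v : Cell) : kingPlane ≃g kingPlane :=
  { Equiv.addRight v with
    map_rel_iff' := by simp [adj_iff, add_sub_add_right_eq_sub] }

theorem kingGraph_le (n : ℕ) : kingGraph n ≤ kingPlane := fun _ _ h => ⟨h.1, h.2.2.2⟩

theorem kingGraph_adj {n : ℕ} {a b : Cell} (ha : a ∈ sqBoard n) (hb : b ∈ sqBoard n)
    (h : kingPlane.Adj a b) : (kingGraph n).Adj a b :=
  ⟨h.1, ha, hb, h.2⟩

end kingPlane

namespace Cell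

def line (a d : Cell) (k : ℕ) : List Cell :=
  (List.range k).map fun i : ℕ => (a.1 + i * d.1, a.2 + i * d.2)

variable {a d c : Cell} {k : ℕ}

theorem line_succ : line a d (k + 1) = a :: line (a + d) d k := by
  simp only [line, List.range_succ_eq_map, List.map_cons, List.map_map]
  congr 1
  · simp
  · congr 1
    funext i
    simp only [Function.comp_apply, Nat.succ_eq_add_one, Nat.cast_succ, Prod.fst_add, Prod.snd_add]
    congr 1 <;> ring

theorem line_succ' : line a d (k + 1) = line a d k ++ [(a.1 + k * d.1, a.2 + k * d.2)] := by
  simp [line, List.range_succ]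

theorem mem_line : c ∈ line a d k ↔ ∃ i < k, c.1 = a.1 + i * d.1 ∧ c.2 = a.2 + i * d.2 := by
  simp [line, Prod.ext_iff, eq_comm]

@[simp]
theorem head?_line_succ : (line a d (k + 1)).head? = some a := by
  rw [line_succ]; rfl

@[simp]
theorem getLast?_line_succ :
    (line a d (k + 1)).getLast? = some (a.1 + k * d.1, a.2 + k * d.2) := by
  rw [line_succ']; simp

theorem length_line : (line a d k).length = k := by simp [line]

theorem isSnakeList_line (hd : kingPlane.Adj 0 d) : ∀ a k, kingPlane.IsSnakeList (line a d k)
  | _, 0 => trivial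
  | _, 1 => trivial
  | a, k + 2 => by
    have hd' := kingPlane.adj_iff_le.1 hd
    simp only [Prod.fst_zero, Prod.snd_zero] at hd'
    rw [line_succ, line_succ]
    refine ⟨?_, fun c hc => ?_, line_succ ▸ isSnakeList_line hd (a + d) (k + 1)⟩
    · rw [kingPlane.adj_iff_le, Prod.fst_add, Prod.snd_add]
      omega
    · obtain ⟨i, -, hc₁, hc₂⟩ := mem_line.1 hc
      simp only [Prod.fst_add, Prod.snd_add] at hc₁ hc₂
      rw [kingPlane.apart_iff, hc₁, hc₂]
      rcases hd' with ⟨hd₁ | hd₂, hb⟩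
      · rcases (by omega : d.1 = 1 ∨ d.1 = -1) with h | h <;> rw [h] <;> omega
      · rcases (by omega : d.2 = 1 ∨ d.2 = -1) with h | h <;> rw [h] <;> omega

end Cell

open Cell

def hook (n : ℕ) : List Cell :=
  line (0, 0) (0, 1) (n - 1) ++ line (1, n - 1) (1, 0) (n - 2) ++
    line (n - 1, n - 2) (0, -1) (n - 4) ++ [((n : ℤ) - 2, 2)]

def foot (n : ℕ) : List Cell := (2, 1) :: line (3, 0) (1, 0) (n - 3)

theorem getLast?_hook (n : ℕ) : (hook n).getLast? = some ((n : ℤ) - 2, 2) := by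
  simp [hook]

theorem getLast?_foot {n : ℕ} (hn : 4 ≤ n) : (foot n).getLast? = some ((n : ℤ) - 1, 0) := by
  rw [foot, List.getLast?_cons, show n - 3 = n - 4 + 1 by omega, getLast?_line_succ,
    Option.getD_some, Option.some.injEq, Prod.ext_iff]
  omega

theorem mem_hook {n : ℕ} {c : Cell} (h : c ∈ hook n) :
    c.1 = 0 ∧ 0 ≤ c.2 ∧ c.2 ≤ n - 2 ∨ c.2 = n - 1 ∧ 1 ≤ c.1 ∧ c.1 ≤ n - 2 ∨
      c.1 = n - 1 ∧ 3 ≤ c.2 ∧ c.2 ≤ n - 2 ∨ c.1 = n - 2 ∧ c.2 = 2 := by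
  simp only [hook, List.mem_append, mem_line, List.mem_singleton] at h
  rcases h with ((⟨i, hi, h₁, h₂⟩ | ⟨i, hi, h₁, h₂⟩) | ⟨i, hi, h₁, h₂⟩) | rfl
  all_goals omega

theorem mem_foot {n : ℕ} {c : Cell} (h : c ∈ foot n) :
    c.1 = 2 ∧ c.2 = 1 ∨ c.2 = 0 ∧ 3 ≤ c.1 ∧ c.1 ≤ n - 1 := by
  simp only [foot, List.mem_cons, mem_line] at h
  rcases h with rfl | ⟨i, hi, h₁, h₂⟩
  · exact .inl ⟨rfl, rfl⟩
  · omega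

theorem isSnakeList_hook {n : ℕ} (hn : 5 ≤ n) : kingPlane.IsSnakeList (hook n) := by
  obtain ⟨k, rfl⟩ := Nat.exists_eq_add_of_le' hn
  have hup : kingPlane.Adj 0 (0, 1) := by decide
  have hright : kingPlane.Adj 0 (1, 0) := by decide
  have hdown : kingPlane.Adj 0 (0, -1) := by decide
  simp only [hook, show k + 5 - 1 = k + 3 + 1 by omega, show k + 5 - 2 = k + 2 + 1 by omega,
    show k + 5 - 4 = k + 1 by omega]
  refine (((isSnakeList_line hup _ _).append (isSnakeList_line hright _ _) getLast?_line_succ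
    head?_line_succ ?_ ?_).append (isSnakeList_line hdown _ _)
    (by rw [List.getLast?_append, getLast?_line_succ]; rfl) head?_line_succ ?_ ?_).append
    (isSnakeList_singleton _) (by rw [List.getLast?_append, getLast?_line_succ]; rfl) rfl ?_ ?_
  all_goals
    simp only [List.mem_append, List.mem_singleton, mem_line, or_imp, forall_and,
      forall_exists_index, and_imp, kingPlane.apart_iff, kingPlane.adj_iff_le, Prod.ext_iff]
    split_ands <;> intros <;> omega

theorem isSnakeList_foot (n : ℕ) : kingPlane.IsSnakeList (foot n) := by
  rw [foot]
  generalize n - 3 = k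
  cases k with
  | zero => trivial
  | succ k => ?_
  refine (isSnakeList_singleton _).append (isSnakeList_line (by decide) _ _)
    List.getLast?_singleton head?_line_succ (by decide) fun x hx c hc => ?_
  obtain ⟨i, -, hc₁, hc₂⟩ := mem_line.1 hc
  rw [List.mem_singleton.1 hx]
  simp only [kingPlane.apart_iff, Prod.ext_iff, true_and] at hc₁ hc₂ ⊢
  omega

/-- The cells `(1, 0)` and `(n - 1, 1)` must stay free: once the snake is reversed and shifted
into a frame, they are the neighbours of the frame cells attached to its two ends. -/
structure IsCornerSnake (n : ℕ) (L : List Cell) : Prop where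
  isSnakeList : kingPlane.IsSnakeList L
  length_eq : L.length = n ^ 2 / 2
  mem_board : ∀ c ∈ L, c ∈ sqBoard n
  head?_eq : L.head? = some (0, 0)
  getLast?_eq : L.getLast? = some ((n : ℤ) - 1, 0)
  not_mem_right : ((1 : ℤ), (0 : ℤ)) ∉ L
  not_mem_above : ((n : ℤ) - 1, (1 : ℤ)) ∉ L

def frame (n : ℕ) (L : List Cell) : List Cell :=
  hook (n + 4) ++ (L.map (· + (2, 2))).reverse ++ foot (n + 4)

theorem mem_frame_inner {n : ℕ} {L : List Cell} (h : IsCornerSnake n L) {c : Cell}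
    (hc : c ∈ (L.map (· + (2, 2))).reverse) :
    2 ≤ c.1 ∧ c.1 ≤ n + 1 ∧ 2 ≤ c.2 ∧ c.2 ≤ n + 1 ∧ ¬(c.1 = 3 ∧ c.2 = 2) ∧
      ¬(c.1 = n + 1 ∧ c.2 = 3) := by
  obtain ⟨y, hy, rfl⟩ := List.mem_map.1 (List.mem_reverse.1 hc)
  have h₁ := h.mem_board y hy
  have h₂ := h.not_mem_right
  have h₃ := h.not_mem_above
  simp only [sqBoard, Set.mem_ofPred_eq] at h₁
  simp only [Prod.fst_add, Prod.snd_add]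
  refine ⟨by omega, by omega, by omega, by omega, fun ⟨e₁, e₂⟩ => h₂ ?_, fun ⟨e₁, e₂⟩ => h₃ ?_⟩
  · rwa [show y = (1, 0) from Prod.ext (by dsimp; omega) (by dsimp; omega)] at hy
  · rwa [show y = ((n : ℤ) - 1, 1) from Prod.ext (by dsimp; omega) (by dsimp; omega)] at hy

theorem mem_frame {n : ℕ} {L : List Cell} (h : IsCornerSnake n L) {c : Cell}
    (hc : c ∈ frame n L) :
    c ∈ sqBoard (n + 4) ∧ c ≠ (1, 0) ∧ c ≠ (((n + 4 : ℕ) : ℤ) - 1, 1) := by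
  simp only [sqBoard, Set.mem_ofPred_eq, ne_eq, Prod.ext_iff]
  rcases List.mem_append.1 hc with hc | hc
  · rcases List.mem_append.1 hc with hc | hc
    · have := mem_hook hc
      omega
    · have := mem_frame_inner h hc
      omega
  · have := mem_foot hc
    omega

theorem isCornerSnake_frame {n : ℕ} {L : List Cell} (hn : 2 ≤ n) (h : IsCornerSnake n L) :
    IsCornerSnake (n + 4) (frame n L) where
  isSnakeList := by
    have hinner : kingPlane.IsSnakeList (L.map (· + (2, 2))).reverse :=
      (h.isSnakeList.map (kingPlane.translate (2, 2)).toEmbedding).reverse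
    refine ((isSnakeList_hook (n := n + 4) (by omega)).append hinner (getLast?_hook _)
      (b := ((n : ℤ) + 1, 2)) ?_ (by simp only [kingPlane.adj_iff_le]; omega)
      fun x hx c hc => ?_).append (isSnakeList_foot _) (a := (2, 2)) (b := (2, 1)) ?_
      rfl (by simp only [kingPlane.adj_iff_le]; omega) fun x hx c hc => ?_
    · simp only [List.head?_reverse, List.getLast?_map, h.getLast?_eq, Option.map_some,
        Prod.mk_add_mk, Option.some.injEq, Prod.ext_iff]
      omega
    · have := mem_hook hx
      have := mem_frame_inner h hc
      rw [kingPlane.apart_iff, Prod.ext_iff, Prod.ext_iff]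
      omega
    · simp [List.getLast?_append, h.head?_eq]
    · have := mem_foot hc
      rw [kingPlane.apart_iff, Prod.ext_iff, Prod.ext_iff]
      rcases List.mem_append.1 hx with hx | hx
      · have := mem_hook hx
        omega
      · have := mem_frame_inner h hx
        omega
  length_eq := by
    have hsq : (n + 4) ^ 2 / 2 = n ^ 2 / 2 + (4 * n + 8) := by
      rw [show (n + 4) ^ 2 = n ^ 2 + 2 * (4 * n + 8) by ring, Nat.add_mul_div_left _ _ two_pos]
    simp only [frame, hook, foot, List.length_append, List.length_reverse, List.length_map,
      length_line, List.length_cons, List.length_nil, h.length_eq]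
    omega
  mem_board c hc := (mem_frame h hc).1
  head?_eq := by
    simp [frame, hook]
  getLast?_eq := by
    rw [frame, List.getLast?_append, getLast?_foot (by omega), Option.some_or]
  not_mem_right hc := (mem_frame h hc).2.1 rfl
  not_mem_above hc := (mem_frame h hc).2.2 rfl

def cornerSnake : ℕ → List Cell
  | 4 => [(0, 0), (0, 1), (0, 2), (1, 3), (2, 3), (3, 2), (2, 1), (3, 0)]
  | 6 => [(0, 0), (0, 1), (0, 2), (0, 3), (0, 4), (1, 5), (2, 5), (3, 5), (4, 5), (5, 4), (5, 3),
      (4, 2), (3, 3), (2, 2), (2, 1), (3, 0), (4, 0), (5, 0)]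
  | n + 8 => frame (n + 4) (cornerSnake (n + 4))
  | _ => []

theorem isCornerSnake_cornerSnake_four : IsCornerSnake 4 (cornerSnake 4) where
  isSnakeList := by decide
  length_eq := rfl
  mem_board := by simp only [sqBoard, Set.mem_ofPred_eq]; decide
  head?_eq := rfl
  getLast?_eq := by decide
  not_mem_right := by decide
  not_mem_above := by decide

theorem isCornerSnake_cornerSnake_six : IsCornerSnake 6 (cornerSnake 6) where
  isSnakeList := by decide
  length_eq := rfl
  mem_board := by simp only [sqBoard, Set.mem_ofPred_eq]; decide
  head?_eq := rfl
  getLast?_eq := by decide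
  not_mem_right := by decide
  not_mem_above := by decide

theorem isCornerSnake_cornerSnake : ∀ n, Even n → 4 ≤ n → IsCornerSnake n (cornerSnake n)
  | 4, _, _ => isCornerSnake_cornerSnake_four
  | 6, _, _ => isCornerSnake_cornerSnake_six
  | n + 8, hn, _ => isCornerSnake_frame (by omega)
      (isCornerSnake_cornerSnake (n + 4) (by rw [Nat.even_iff] at hn ⊢; omega) (by omega))
  | 5, hn, _ | 7, hn, _ => absurd hn (by decide)
  | 0, _, h | 1, _, h | 2, _, h | 3, _, h => absurd h (by decide)

theorem exists_isSnakeList_kingGraph {n : ℕ} (hn : Even n) :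
    ∃ a l, (kingGraph n).IsSnakeList (a :: l) ∧ l.length = n ^ 2 / 2 - 1 := by
  obtain rfl | rfl | h4 : n = 0 ∨ n = 2 ∨ 4 ≤ n := by
    rw [Nat.even_iff] at hn; omega
  · exact ⟨(0, 0), [], trivial, rfl⟩
  · exact ⟨(0, 0), [(0, 1)], ⟨kingPlane.kingGraph_adj (by simp [sqBoard]) (by simp [sqBoard])
      (by decide), by simp, trivial⟩, rfl⟩
  · have h := isCornerSnake_cornerSnake n hn h4
    obtain ⟨l, hl⟩ := List.head?_eq_some_iff.1 h.head?_eq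
    have hlen := h.length_eq
    rw [hl, List.length_cons] at hlen
    refine ⟨(0, 0), l, ?_, by omega⟩
    rw [← hl]
    exact h.isSnakeList.of_le (kingPlane.kingGraph_le n) fun x hx y hy hxy =>
      kingPlane.kingGraph_adj (h.mem_board x hx) (h.mem_board y hy) hxy

theorem king_even_lower_general (n : ℕ) (hn : Even n) :
    ∃ (a b : Cell) (p : (kingGraph n).Walk a b),
      IsSnake (kingGraph n) p ∧ p.length = n ^ 2 / 2 - 1 := by
  obtain ⟨a, l, hl, hlen⟩ := exists_isSnakeList_kingGraph hn
  obtain ⟨b, p, hsupp, hp⟩ := hl.exists_walk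
  refine ⟨a, b, p, hp, ?_⟩
  have := congrArg List.length hsupp
  rw [Walk.length_support, List.length_cons] at this
  omega

/-- For every even positive integer n, the king graph on an n×n board
contains an induced path of length n²/2 − 1. -/
theorem king_even_lower (n : ℕ) (hn : Even n) (h0 : 0 < n) :
    ∃ (a b : Cell) (p : (kingGraph n).Walk a b),
      IsSnake (kingGraph n) p ∧ p.length = n ^ 2 / 2 - 1 :=
  king_even_lower_general n hn
end

section
/- For every odd positive integer n, the king graph on an n×n board contains an induced path of length (n² − 1)/2. Explicitly, with n = 2k−1, the set consisting of all cells (x,y) with 1 ≤ x ≤ n−2 and y even, together with (0,0), the cell (0,n−1) if k is even and (n−1,n−1) if k is odd, the cells (0,y) with y ≡ 3 (mod 4), and the cells (n−1,y) with y ≡ 1 (mod 4), is the vertex set of an induced path of length (n²−1)/2. -/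
open SimpleGraph

/-! Write `n = 2m + 1`. Starting in the corner `(0, 0)`, the path runs through the even rows
`0, 2, …, 2m` on the interior columns `1, …, 2m - 1`, alternately left to right and right to left;
rows `2q - 2` and `2q` are joined through the single side cell at height `2q - 1`, and the path
ends in the corner of the top row. Numbering its cells `i = 2mq + r` with `r < 2m`, a case
analysis shows that two of them are king-adjacent exactly when their numbers differ by one, so the
path is induced; it has `2m(m + 1) + 1 = (n² + 1) / 2` cells. -/

namespace SimpleGraph

variable {V : Type*} (G : SimpleGraph V)

theorem exists_walk_support_eq_map_range (f : ℕ → V) (L : ℕ)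
    (h : ∀ i < L, G.Adj (f i) (f (i + 1))) :
    ∃ p : G.Walk (f 0) (f L), p.support = (List.range (L + 1)).map f ∧
      p.edges = (List.range L).map fun i => s(f i, f (i + 1)) := by
  induction L with
  | zero => exact ⟨.nil, by simp [List.range_succ], by simp⟩
  | succ L ih =>
    obtain ⟨p, hs, he⟩ := ih fun i hi => h i (by omega)
    refine ⟨p.concat (h L (by omega)), ?_, ?_⟩
    · rw [Walk.support_concat, hs, List.range_succ (n := L + 1)]
      simp
    · rw [Walk.edges_concat, he, List.range_succ]
      simp

theorem exists_isSnake_of_adj_iff {f : ℕ → V} {L : ℕ} (hinj : Set.InjOn f (Set.Iic L))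
    (hadj : ∀ i ≤ L, ∀ j ≤ L, G.Adj (f i) (f j) ↔ j = i + 1 ∨ i = j + 1) :
    ∃ p : G.Walk (f 0) (f L),
      IsSnake G p ∧ p.length = L ∧ {v | v ∈ p.support} = f '' Set.Iic L := by
  obtain ⟨p, hs, he⟩ := G.exists_walk_support_eq_map_range f L fun i hi =>
    (hadj i hi.le (i + 1) hi).2 (.inl rfl)
  have mem_support {v} : v ∈ p.support ↔ ∃ i ≤ L, f i = v := by
    simp [hs]
  refine ⟨p, ⟨Walk.IsPath.mk' ?_, ?_⟩, ?_, ?_⟩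
  · rw [hs]
    exact List.Nodup.map_on (fun i hi j hj => hinj (by simpa [Nat.lt_succ_iff] using hi)
      (by simpa [Nat.lt_succ_iff] using hj)) List.nodup_range
  · rintro _ hu _ hv huv
    obtain ⟨i, hi, rfl⟩ := mem_support.1 hu
    obtain ⟨j, hj, rfl⟩ := mem_support.1 hv
    rw [he, List.mem_map]
    rcases (hadj i hi j hj).1 huv with rfl | rfl
    · exact ⟨i, List.mem_range.2 (by omega), rfl⟩
    · exact ⟨j, List.mem_range.2 (by omega), Sym2.eq_swap⟩
  · simpa [hs] using p.length_support.symm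
  · ext v
    exact mem_support

end SimpleGraph

/-- `b` is the successor of `a` in `ℕ × Fin d`, ordered lexicographically. -/
def LexSucc (d : ℕ) (a b : ℕ × ℕ) : Prop :=
  (b.1 = a.1 ∧ b.2 = a.2 + 1) ∨ (b.1 = a.1 + 1 ∧ a.2 + 1 = d ∧ b.2 = 0)

namespace Nat

variable {d : ℕ}

theorem eq_add_one_iff_lexSucc (hd : 0 < d) {i j : ℕ} :
    j = i + 1 ↔ LexSucc d (i / d, i % d) (j / d, j % d) := by
  have hi := Nat.div_add_mod i d
  have hj := Nat.div_add_mod j d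
  have hir := Nat.mod_lt i hd
  have hjr := Nat.mod_lt j hd
  dsimp only [LexSucc]
  constructor
  · rintro rfl
    by_cases hr : i % d + 1 < d
    · exact .inl ((Nat.div_mod_unique hd).2 ⟨by omega, hr⟩)
    · have := (Nat.div_mod_unique hd).2 (⟨by rw [Nat.mul_succ]; omega, hd⟩ :
        0 + d * (i / d + 1) = i + 1 ∧ 0 < d)
      exact .inr ⟨this.1, by omega, this.2⟩
  · rintro (⟨hq, hr⟩ | ⟨hq, hr, hr'⟩) <;> rw [hq] at hj
    · omega
    · rw [Nat.mul_succ] at hj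
      omega

theorem bijOn_divMod_Iic (hd : 0 < d) (N : ℕ) :
    Set.BijOn (fun i => (i / d, i % d)) (Set.Iic (d * N))
      {a | (a.1 < N ∧ a.2 < d) ∨ (a.1 = N ∧ a.2 = 0)} := by
  refine ⟨fun i hi => ?_, fun i _ j _ h => ?_, fun a ha => ?_⟩
  · have hq : i / d ≤ N := Nat.div_le_of_le_mul hi
    rcases hq.lt_or_eq with hq | hq
    · exact .inl ⟨hq, Nat.mod_lt i hd⟩
    · refine .inr ⟨hq, ?_⟩
      have := Nat.div_add_mod i d
      rw [hq] at this
      change i ≤ d * N at hi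
      change i % d = 0
      omega
  · simp only [Prod.mk.injEq] at h
    rw [← Nat.div_add_mod i d, ← Nat.div_add_mod j d, h.1, h.2]
  · refine ⟨d * a.1 + a.2, ?_, ?_⟩
    · rcases ha with ⟨hq, hr⟩ | ⟨hq, hr⟩
      · have := Nat.mul_le_mul_left d (Nat.succ_le_of_lt hq)
        rw [Nat.mul_succ] at this
        change d * a.1 + a.2 ≤ d * N
        omega
      · simp [hq, hr]
    · have hr : a.2 < d := by rcases ha with ⟨-, hr⟩ | ⟨-, hr⟩ <;> omega
      simp only [Prod.ext_iff]
      exact (Nat.div_mod_unique hd).2 ⟨by ring, hr⟩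

end Nat

/-- Cell `r` of block `q` of the path on the `(2m + 1) × (2m + 1)` board: for `r = 0` the side
cell at height `2q - 1`, clamped to the board (so block `0` starts in the corner `(0, 0)` and the
lone cell of block `m + 1` is the final corner); for `r > 0` cell `r` of row `2q`, counted from the
left for even `q` and from the right for odd `q`. -/
def snakeCell (m : ℕ) (a : ℕ × ℕ) : Cell :=
  if a.2 = 0 then (if a.1 % 2 = 0 then 0 else 2 * m, max 0 (min (2 * a.1 - 1) (2 * m)))
  else (if a.1 % 2 = 0 then a.2 else 2 * m - a.2, 2 * a.1)

def snakeDomain (m : ℕ) : Set (ℕ × ℕ) :=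
  {a | (a.1 < m + 1 ∧ a.2 < 2 * m) ∨ (a.1 = m + 1 ∧ a.2 = 0)}

def kingSnakeSet (k n : ℕ) : Set Cell :=
  {v : Cell |
    (1 ≤ v.1 ∧ v.1 ≤ (n : ℤ) - 2 ∧ 0 ≤ v.2 ∧ v.2 ≤ (n : ℤ) - 1 ∧ Even v.2) ∨
    v = (0, 0) ∨
    (Even k ∧ v = (0, (n : ℤ) - 1)) ∨
    (Odd k ∧ v = ((n : ℤ) - 1, (n : ℤ) - 1)) ∨
    (v.1 = 0 ∧ 0 ≤ v.2 ∧ v.2 ≤ (n : ℤ) - 1 ∧ v.2 % 4 = 3) ∨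
    (v.1 = (n : ℤ) - 1 ∧ 0 ≤ v.2 ∧ v.2 ≤ (n : ℤ) - 1 ∧ v.2 % 4 = 1)}

def KingNear (u v : Cell) : Prop :=
  |u.1 - v.1| ≤ 1 ∧ |u.2 - v.2| ≤ 1

theorem KingNear.symm {u v : Cell} (h : KingNear u v) : KingNear v u := by
  unfold KingNear at *
  rwa [abs_sub_comm u.1, abs_sub_comm u.2] at h

theorem kingGraph_adj_iff {n : ℕ} {u v : Cell} :
    (kingGraph n).Adj u v ↔ u ≠ v ∧ u ∈ sqBoard n ∧ v ∈ sqBoard n ∧ KingNear u v :=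
  Iff.rfl

section Snake

variable {m : ℕ}

theorem snakeCell_injOn : Set.InjOn (snakeCell m) (snakeDomain m) := by
  rintro ⟨q, r⟩ ha ⟨q', r'⟩ hb h
  simp only [snakeDomain, Set.mem_ofPred_eq] at ha hb
  simp only [snakeCell, Prod.ext_iff] at h ⊢
  split_ifs at h <;> omega

theorem snakeCell_mem_sqBoard {a : ℕ × ℕ} (ha : a ∈ snakeDomain m) :
    snakeCell m a ∈ sqBoard (2 * m + 1) := by
  obtain ⟨q, r⟩ := a
  simp only [snakeDomain, Set.mem_ofPred_eq] at ha
  simp only [sqBoard, snakeCell, Set.mem_ofPred_eq]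
  push_cast
  split_ifs <;> omega

theorem kingNear_snakeCell_of_lexSucc {a b : ℕ × ℕ} (ha : a ∈ snakeDomain m)
    (hb : b ∈ snakeDomain m) (h : LexSucc (2 * m) a b) :
    KingNear (snakeCell m a) (snakeCell m b) := by
  obtain ⟨q, r⟩ := a
  obtain ⟨q', r'⟩ := b
  simp only [snakeDomain, Set.mem_ofPred_eq] at ha hb
  simp only [LexSucc] at h
  simp only [KingNear, snakeCell, abs_le]
  split_ifs <;> omega

theorem kingNear_snakeCell_rows {q r q' r' : ℕ} (hr : r ≠ 0) (hr' : r' ≠ 0)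
    (h : KingNear (snakeCell m (q, r)) (snakeCell m (q', r'))) :
    q' = q ∧ r' ≤ r + 1 ∧ r ≤ r' + 1 := by
  simp only [KingNear, snakeCell, if_neg hr, if_neg hr', abs_le] at h
  split_ifs at h <;> omega

theorem kingNear_snakeCell_connectors {q q' : ℕ} (hm : 0 < m) (hq : q ≤ m + 1)
    (hq' : q' ≤ m + 1) (h : KingNear (snakeCell m (q, 0)) (snakeCell m (q', 0))) :
    q' = q := by
  simp only [KingNear, snakeCell, if_true, abs_le] at h
  split_ifs at h <;> omega

theorem kingNear_snakeCell_row_connector {q r q' : ℕ} (hr : r ≠ 0) (hrm : r < 2 * m)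
    (hq' : q' ≤ m + 1) (h : KingNear (snakeCell m (q, r)) (snakeCell m (q', 0))) :
    (q' = q ∧ r = 1) ∨ (q' = q + 1 ∧ r + 1 = 2 * m) := by
  simp only [KingNear, snakeCell, if_true, if_neg hr, abs_le] at h
  split_ifs at h <;> omega

theorem lexSucc_of_kingNear_snakeCell {a b : ℕ × ℕ} (ha : a ∈ snakeDomain m)
    (hb : b ∈ snakeDomain m) (hab : a ≠ b) (h : KingNear (snakeCell m a) (snakeCell m b)) :
    LexSucc (2 * m) a b ∨ LexSucc (2 * m) b a := by
  obtain ⟨q, r⟩ := a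
  obtain ⟨q', r'⟩ := b
  simp only [snakeDomain, Set.mem_ofPred_eq] at ha hb
  simp only [ne_eq, Prod.ext_iff] at hab
  simp only [LexSucc]
  rcases eq_or_ne r 0 with rfl | hr <;> rcases eq_or_ne r' 0 with rfl | hr'
  · have := kingNear_snakeCell_connectors (by omega) (by omega) (by omega) h
    omega
  · have := kingNear_snakeCell_row_connector hr' (by omega) (by omega) h.symm
    omega
  · have := kingNear_snakeCell_row_connector hr (by omega) (by omega) h
    omega
  · have := kingNear_snakeCell_rows hr hr' h
    omega

theorem kingGraph_adj_snakeCell_iff {a b : ℕ × ℕ} (ha : a ∈ snakeDomain m)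
    (hb : b ∈ snakeDomain m) :
    (kingGraph (2 * m + 1)).Adj (snakeCell m a) (snakeCell m b) ↔
      LexSucc (2 * m) a b ∨ LexSucc (2 * m) b a := by
  rw [kingGraph_adj_iff, snakeCell_injOn.ne_iff ha hb]
  constructor
  · rintro ⟨hab, -, -, h⟩
    exact lexSucc_of_kingNear_snakeCell ha hb hab h
  · intro h
    refine ⟨?_, snakeCell_mem_sqBoard ha, snakeCell_mem_sqBoard hb, ?_⟩
    · rintro rfl
      rcases h with h | h <;> simp [LexSucc] at h
    · rcases h with h | h
      exacts [kingNear_snakeCell_of_lexSucc ha hb h, (kingNear_snakeCell_of_lexSucc hb ha h).symm]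

theorem snakeCell_mem_kingSnakeSet {a : ℕ × ℕ} (ha : a ∈ snakeDomain m) :
    snakeCell m a ∈ kingSnakeSet (m + 1) (2 * m + 1) := by
  obtain ⟨q, r⟩ := a
  simp only [snakeDomain, Set.mem_ofPred_eq] at ha
  simp only [kingSnakeSet, Set.mem_ofPred_eq, Prod.ext_iff, Int.even_iff, Nat.even_iff,
    Nat.odd_iff]
  push_cast
  rcases eq_or_ne r 0 with rfl | hr
  · simp only [snakeCell, if_true]
    rcases Nat.eq_zero_or_pos q with rfl | hq0
    · exact .inr (.inl (by simp))
    rcases ha with ⟨hq, -⟩ | ⟨rfl, -⟩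
    · refine .inr (.inr (.inr (.inr ?_)))
      split_ifs <;> omega
    · refine .inr (.inr ?_)
      split_ifs <;> omega
  · refine .inl ?_
    simp only [snakeCell, if_neg hr]
    split_ifs <;> omega

theorem exists_snakeCell_eq {v : Cell} (hv : v ∈ kingSnakeSet (m + 1) (2 * m + 1)) :
    ∃ a ∈ snakeDomain m, snakeCell m a = v := by
  obtain ⟨x, y⟩ := v
  simp only [kingSnakeSet, Set.mem_ofPred_eq, Prod.ext_iff, Int.even_iff, Nat.even_iff,
    Nat.odd_iff] at hv
  push_cast at hv
  simp only [snakeDomain, snakeCell, Set.mem_ofPred_eq, Prod.exists, Prod.ext_iff]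
  rcases hv with ⟨hx, hx', hy, hy', hy2⟩ | ⟨rfl, rfl⟩ | ⟨hk, rfl, rfl⟩ | ⟨hk, rfl, rfl⟩ |
    ⟨rfl, hy, hy', hy4⟩ | ⟨rfl, hy, hy', hy4⟩
  · rcases Nat.mod_two_eq_zero_or_one (y.toNat / 2) with hq | hq
    · refine ⟨y.toNat / 2, x.toNat, ?_⟩
      split_ifs <;> omega
    · refine ⟨y.toNat / 2, 2 * m - x.toNat, ?_⟩
      split_ifs <;> omega
  · rcases Nat.eq_zero_or_pos m with rfl | hm
    · exact ⟨1, 0, by simp⟩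
    · exact ⟨0, 0, by simp [hm]⟩
  · refine ⟨m + 1, 0, ?_⟩
    simp only [if_true, and_self, or_true, true_and, if_pos hk]
    omega
  · refine ⟨m + 1, 0, ?_⟩
    simp only [if_true, and_self, or_true, true_and, if_neg (by omega : ¬(m + 1) % 2 = 0)]
    omega
  · refine ⟨(y.toNat + 1) / 2, 0, ?_⟩
    simp only [if_true]
    split_ifs <;> omega
  · refine ⟨(y.toNat + 1) / 2, 0, ?_⟩
    simp only [if_true]
    split_ifs <;> omega

theorem image_snakeCell : snakeCell m '' snakeDomain m = kingSnakeSet (m + 1) (2 * m + 1) :=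
  Set.Subset.antisymm (Set.image_subset_iff.2 fun _ => snakeCell_mem_kingSnakeSet)
    fun _ hv => exists_snakeCell_eq hv

end Snake

/-- explicit maximum-length induced path in the king graph on an odd board. -/
theorem king_odd_lower (k n : ℕ) (hk : 0 < k) (hn : n = 2 * k - 1) :
    ∃ (a b : Cell) (p : (kingGraph n).Walk a b),
      IsSnake (kingGraph n) p ∧ p.length = (n ^ 2 - 1) / 2 ∧
      {v : Cell | v ∈ p.support} =
        {v : Cell |
          (1 ≤ v.1 ∧ v.1 ≤ (n : ℤ) - 2 ∧ 0 ≤ v.2 ∧ v.2 ≤ (n : ℤ) - 1 ∧ Even v.2) ∨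
          v = (0, 0) ∨
          (Even k ∧ v = (0, (n : ℤ) - 1)) ∨
          (Odd k ∧ v = ((n : ℤ) - 1, (n : ℤ) - 1)) ∨
          (v.1 = 0 ∧ 0 ≤ v.2 ∧ v.2 ≤ (n : ℤ) - 1 ∧ v.2 % 4 = 3) ∨
          (v.1 = (n : ℤ) - 1 ∧ 0 ≤ v.2 ∧ v.2 ≤ (n : ℤ) - 1 ∧ v.2 % 4 = 1)} := by
  obtain ⟨m, rfl⟩ : ∃ m, k = m + 1 := ⟨k - 1, by omega⟩
  obtain rfl : n = 2 * m + 1 := by omega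
  rcases Nat.eq_zero_or_pos m with rfl | hm
  · refine ⟨(0, 0), (0, 0), .nil, ⟨.nil, by simp⟩, rfl, .trans ?_ (image_snakeCell (m := 0))⟩
    ext v
    simp [snakeDomain, snakeCell, eq_comm]
  have hbij := Nat.bijOn_divMod_Iic (d := 2 * m) (by omega) (m + 1)
  obtain ⟨p, hp, hlen, hsupp⟩ := (kingGraph (2 * m + 1)).exists_isSnake_of_adj_iff
    (snakeCell_injOn.comp hbij.injOn hbij.mapsTo) fun i hi j hj => by
      rw [Function.comp_apply, Function.comp_apply,
        kingGraph_adj_snakeCell_iff (hbij.mapsTo hi) (hbij.mapsTo hj),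
        Nat.eq_add_one_iff_lexSucc (d := 2 * m) (by omega),
        Nat.eq_add_one_iff_lexSucc (d := 2 * m) (by omega)]
  refine ⟨_, _, p, hp, ?_, ?_⟩
  · rw [hlen, Nat.sub_eq_of_eq_add (by ring : (2 * m + 1) ^ 2 = 2 * (2 * m * (m + 1)) + 1)]
    omega
  · rw [hsupp, Set.image_comp, hbij.image_eq]
    exact image_snakeCell
end

section
/- Call a cell (x,y) of the odd board odd if both x and y are odd, and call an edge of the king graph regular if neither endpoint is odd. For any little block B (a triangle on cells a, a+(0,1), a+(1,0), a+(1,1) with the three mutual edges among a, a+(0,1), a+(1,0)), and any induced path P in the king graph, the number of odd cells of B visited by P plus the number of the three regular edges of B traversed by P is at most 1. -/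
open SimpleGraph

/-! The four cells of a little block are pairwise adjacent in the king graph. Each counted item
puts cells of the block on `P` (the odd cell itself, or both ends of the edge), and any two items
put three of the four cells on `P`. Since `P` is induced, the three edges among them are all
edges of `P`, and a path contains no triangle. -/

namespace SimpleGraph.Walk

variable {V : Type*} {G : SimpleGraph V}

theorem IsPath.not_triangle_s5 {a b x y z : V} {p : G.Walk a b} (hp : p.IsPath)
    (hxy : s(x, y) ∈ p.edges) (hyz : s(y, z) ∈ p.edges) (hxz : s(x, z) ∈ p.edges) : False := by
  have nxy := (p.adj_of_mem_edges hxy).ne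
  have nyz := (p.adj_of_mem_edges hyz).ne
  have nxz := (p.adj_of_mem_edges hxz).ne
  induction p with
  | nil => simp at hxy
  | cons h q ih =>
    rw [cons_isPath_iff] at hp
    simp only [edges_cons, List.mem_cons, Sym2.eq_iff] at hxy hyz hxz
    grind [fst_mem_support_of_mem_edges, snd_mem_support_of_mem_edges]

end SimpleGraph.Walk

theorem IsSnake.not_triangle_s5 {V : Type*} {G : SimpleGraph V} {a b u v w : V} {p : G.Walk a b}
    (hp : IsSnake G p) (huv : G.Adj u v) (hvw : G.Adj v w) (huw : G.Adj u w)
    (hu : u ∈ p.support) (hv : v ∈ p.support) (hw : w ∈ p.support) : False :=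
  hp.1.not_triangle_s5 (hp.2 u hu v hv huv) (hp.2 v hv w hw hvw) (hp.2 u hu w hw huw)

theorem kingGraph_isClique_square {n : ℕ} {x y : ℤ} (hx0 : 0 ≤ x) (hx1 : x + 1 ≤ (n : ℤ) - 1)
    (hy0 : 0 ≤ y) (hy1 : y + 1 ≤ (n : ℤ) - 1) :
    (kingGraph n).IsClique {(x, y), (x, y + 1), (x + 1, y), (x + 1, y + 1)} := by
  rintro u hu v hv huv
  simp only [Set.mem_insert_iff, Set.mem_singleton_iff] at hu hv
  refine ⟨huv, ?_, ?_, ?_, ?_⟩ <;>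
    rcases hu with rfl | rfl | rfl | rfl <;> rcases hv with rfl | rfl | rfl | rfl <;>
    simp [sqBoard] <;> omega

theorem king_little_block_general (n : ℕ) (z : ℤ)
    (hz0 : 0 ≤ z) (hz1 : z + 1 ≤ (n : ℤ) - 1)
    {a b : Cell} (p : (kingGraph n).Walk a b) (hp : IsSnake (kingGraph n) p) :
    ((if ((z + 1, z + 1) : Cell) ∈ p.support then 1 else 0) +
     ((if s(((z, z) : Cell), ((z, z + 1) : Cell)) ∈ p.edges then 1 else 0) +
      (if s(((z, z) : Cell), ((z + 1, z) : Cell)) ∈ p.edges then 1 else 0) +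
      (if s(((z, z + 1) : Cell), ((z + 1, z) : Cell)) ∈ p.edges then 1 else 0)) : ℕ) ≤ 1 := by
  set A : Cell := (z, z)
  set B : Cell := (z, z + 1)
  set C : Cell := (z + 1, z)
  set O : Cell := (z + 1, z + 1)
  have hK : (kingGraph n).IsClique {A, B, C, O} := kingGraph_isClique_square hz0 hz1 hz0 hz1
  have hAB : (kingGraph n).Adj A B := hK (by simp) (by simp) (by simp [A, B])
  have hAC : (kingGraph n).Adj A C := hK (by simp) (by simp) (by simp [A, C])
  have hAO : (kingGraph n).Adj A O := hK (by simp) (by simp) (by simp [A, O])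
  have hBC : (kingGraph n).Adj B C := hK (by simp) (by simp) (by simp [B, C])
  have hBO : (kingGraph n).Adj B O := hK (by simp) (by simp) (by simp [B, O])
  have hCO : (kingGraph n).Adj C O := hK (by simp) (by simp) (by simp [C, O])
  have hABC := hp.not_triangle_s5 hAB hBC hAC
  have hABO := hp.not_triangle_s5 hAB hBO hAO
  have hACO := hp.not_triangle_s5 hAC hCO hAO
  have hBCO := hp.not_triangle_s5 hBC hCO hBO
  have ends {u v : Cell} (h : s(u, v) ∈ p.edges) : u ∈ p.support ∧ v ∈ p.support :=
    ⟨p.fst_mem_support_of_mem_edges h, p.snd_mem_support_of_mem_edges h⟩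
  split_ifs <;> first | decide | (exfalso; grind)

/-- for a little block at a = (z,z) (z even), the number of odd cells of
the block visited by an induced path plus the number of its three regular edges
traversed is at most 1. -/
theorem king_little_block (n : ℕ) (hn : Odd n) (z : ℤ) (hz : Even z)
    (hz0 : 0 ≤ z) (hz1 : z + 1 ≤ (n : ℤ) - 1)
    {a b : Cell} (p : (kingGraph n).Walk a b) (hp : IsSnake (kingGraph n) p) :
    ((if ((z + 1, z + 1) : Cell) ∈ p.support then 1 else 0) +
     ((if s(((z, z) : Cell), ((z, z + 1) : Cell)) ∈ p.edges then 1 else 0) +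
      (if s(((z, z) : Cell), ((z + 1, z) : Cell)) ∈ p.edges then 1 else 0) +
      (if s(((z, z + 1) : Cell), ((z + 1, z) : Cell)) ∈ p.edges then 1 else 0)) : ℕ) ≤ 1 :=
  king_little_block_general n z hz0 hz1 p hp
end

section
/- Let n = 2k−1 be odd and let ρ be a Hamiltonian path in the k×k grid graph making t turns. Then the path ψ(ρ) in the n×n king graph, obtained by scaling ρ up by a factor of two (replacing each edge a'a'' of ρ by the path 2a' — (a'+a'') — 2a'') and smoothing each turn a'—b—a'' (replacing (a'+b) — 2b — (b+a'') by the single edge (a'+b) — (b+a'')), is an induced path in the king graph of length 2(k²−1) − t. -/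
open SimpleGraph

/-!
Every step a—c of ρ contributes its midpoint a + c, and every cell c contributes 2c unless ρ
turns at c; there the two midpoints around c are diagonal neighbours and are joined directly.
Counting gives the length 2·|ρ| − t. Doubled cells have two even coordinates and midpoints of
unit steps exactly one odd one, so two vertices of ψ(ρ) are king-adjacent only if they are 2c and
the midpoint of a step at c, or the midpoints of two perpendicular steps at a common cell c. As ρ
is a path, these steps are consecutive on ρ, and in both cases the pair is an edge of ψ(ρ).
-/

open SimpleGraph Walk

namespace List

variable {α : Type*} {l : List α} {a c u v x y : α}

theorem Nodup.append_cons_unique {l₁ l₂ r₁ r₂ : List α} (hl : (l₁ ++ c :: r₁).Nodup)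
    (h : l₁ ++ c :: r₁ = l₂ ++ c :: r₂) : l₁ = l₂ ∧ r₁ = r₂ := by
  have hc := (nodup_middle.1 hl).notMem
  rw [mem_append, not_or] at hc
  obtain ⟨h₁, -, h₂⟩ := (append_cons_inj_of_notMem hc.1 hc.2).1 h
  exact ⟨h₁, h₂⟩

theorem Nodup.triple_infix (hl : l.Nodup) (h₁ : [x, c] <:+: l) (h₂ : [c, y] <:+: l) :
    [x, c, y] <:+: l := by
  obtain ⟨s, t, rfl⟩ := h₁
  obtain ⟨s', t', h⟩ := h₂
  have hl' : ((s ++ [x]) ++ c :: t).Nodup := by simpa using hl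
  obtain ⟨-, rfl⟩ := hl'.append_cons_unique (r₂ := y :: t') (l₂ := s') (by simpa using h.symm)
  exact ⟨s, t', by simp⟩

theorem Nodup.eq_of_infix_of_infix_left (hl : l.Nodup) (h₁ : [x, c] <:+: l)
    (h₂ : [y, c] <:+: l) : x = y := by
  obtain ⟨s, t, rfl⟩ := h₁
  obtain ⟨s', t', h⟩ := h₂
  have hl' : ((s ++ [x]) ++ c :: t).Nodup := by simpa using hl
  obtain ⟨h, -⟩ := hl'.append_cons_unique (r₂ := t') (l₂ := s' ++ [y]) (by simpa using h.symm)
  simpa using congrArg getLast? h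

theorem Nodup.eq_of_infix_of_infix_right (hl : l.Nodup) (h₁ : [c, x] <:+: l)
    (h₂ : [c, y] <:+: l) : x = y := by
  obtain ⟨s, t, rfl⟩ := h₁
  obtain ⟨s', t', h⟩ := h₂
  have hl' : (s ++ c :: x :: t).Nodup := by simpa using hl
  obtain ⟨-, h⟩ := hl'.append_cons_unique (r₂ := y :: t') (l₂ := s') (by simpa using h.symm)
  exact (cons_eq_cons.1 h).1

theorem IsInfix.prefix_or_infix_cons (h : [x, y] <:+: l) :
    [x, y] <+: l ∨ ∃ u, [u, x, y] <:+: l := by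
  obtain ⟨s, t, rfl⟩ := h
  rcases eq_nil_or_concat s with rfl | ⟨s', u, rfl⟩
  · exact .inl ⟨t, by simp⟩
  · exact .inr ⟨u, s', t, by simp⟩

theorem IsInfix.suffix_or_infix_concat (h : [x, y] <:+: l) :
    [x, y] <:+ l ∨ ∃ v, [x, y, v] <:+: l := by
  obtain ⟨s, t, rfl⟩ := h
  rcases t with _ | ⟨v, t⟩
  · exact .inl ⟨s, by simp⟩
  · exact .inr ⟨v, s, t, by simp⟩

theorem eq_or_infix_of_mem_cons (h : x ∈ a :: l) : x = a ∨ ∃ u, [u, x] <:+: a :: l := by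
  obtain ⟨s, t, hst⟩ := append_of_mem h
  rcases eq_nil_or_concat s with rfl | ⟨s', u, rfl⟩
  · exact .inl (cons_eq_cons.1 hst).1.symm
  · exact .inr ⟨u, s', t, by simp [hst]⟩

end List

theorem SimpleGraph.Walk.IsPath.triple_infix_support {V : Type*} {G : SimpleGraph V}
    {a b x c y : V} {p : G.Walk a b} (hp : p.IsPath) (hx : s(x, c) ∈ p.edges)
    (hy : s(c, y) ∈ p.edges) (hxy : x ≠ y) :
    [x, c, y] <:+: p.support ∨ [y, c, x] <:+: p.support := by
  have hl := hp.support_nodup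
  rw [← infix_support_iff_mem_edges] at hx hy
  rcases hx with hx | hx <;> rcases hy with hy | hy
  · exact .inl (hl.triple_infix hx hy)
  · exact absurd (hl.eq_of_infix_of_infix_left hx hy) hxy
  · exact absurd (hl.eq_of_infix_of_infix_right hx hy) hxy
  · exact .inr (hl.triple_infix hy hx)

namespace PsiSnake

/-- For unit steps `a—c—d` this says that they are perpendicular; it is the condition in
`TurnsAt`. -/
def IsTurn (a c d : Cell) : Prop := (a.2 = c.2 ∧ d.1 = c.1) ∨ (a.1 = c.1 ∧ d.2 = c.2)

instance (a c d : Cell) : Decidable (IsTurn a c d) := by unfold IsTurn; infer_instance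

lemma isTurn_comm {a c d : Cell} : IsTurn a c d ↔ IsTurn d c a := by unfold IsTurn; tauto

lemma gridGraph_adj_cases {m n : ℕ} {a c : Cell} (h : (gridGraph m n).Adj a c) :
    (a.1 - c.1 = 1 ∨ a.1 - c.1 = -1) ∧ a.2 = c.2 ∨
      a.1 = c.1 ∧ (a.2 - c.2 = 1 ∨ a.2 - c.2 = -1) := by
  have h := h.2.2
  rcases abs_cases (a.1 - c.1) with ⟨_, _⟩ | ⟨_, _⟩ <;>
    rcases abs_cases (a.2 - c.2) with ⟨_, _⟩ | ⟨_, _⟩ <;> omega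

variable {m n k : ℕ} {a b c d u v x y x' y' : Cell}

lemma double_ne_add (h : (gridGraph m n).Adj u v) : 2 • x ≠ u + v := by
  have := gridGraph_adj_cases h
  simp only [two_nsmul, ne_eq, Prod.ext_iff, Prod.fst_add, Prod.snd_add]
  omega

lemma double_injective : Function.Injective (fun x : Cell => 2 • x) :=
  smul_right_injective _ two_ne_zero

lemma sym2_eq_of_add_eq (h₁ : (gridGraph m n).Adj a c) (h₂ : (gridGraph m n).Adj u v)
    (h : a + c = u + v) : s(a, c) = s(u, v) := by
  have := gridGraph_adj_cases h₁
  have := gridGraph_adj_cases h₂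
  simp only [Sym2.eq_iff, Prod.ext_iff, Prod.fst_add, Prod.snd_add] at h ⊢
  omega

lemma not_kingAdj_double_double : ¬ (kingGraph n).Adj (2 • x) (2 • y) := by
  rintro ⟨hne, -, -, h₁, h₂⟩
  simp only [ne_eq, Prod.ext_iff, two_nsmul, Prod.fst_add, Prod.snd_add, abs_le] at hne h₁ h₂
  omega

lemma eq_or_eq_of_kingAdj_double_add (h : (gridGraph m n).Adj u v)
    (hk : (kingGraph k).Adj (2 • x) (u + v)) : x = u ∨ x = v := by
  have := gridGraph_adj_cases h
  obtain ⟨-, -, -, h₁, h₂⟩ := hk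
  simp only [Prod.ext_iff, two_nsmul, Prod.fst_add, Prod.snd_add,
    abs_le] at h₁ h₂ ⊢
  omega

lemma kingAdj_add_add_cases (h : (gridGraph m n).Adj x y) (h' : (gridGraph m n).Adj x' y')
    (hk : (kingGraph k).Adj (x + y) (x' + y')) :
    (x = x' ∧ y ≠ y' ∧ IsTurn y x y') ∨ (x = y' ∧ y ≠ x' ∧ IsTurn y x x') ∨
    (y = x' ∧ x ≠ y' ∧ IsTurn x y y') ∨ (y = y' ∧ x ≠ x' ∧ IsTurn x y x') := by
  obtain ⟨hne, -, -, h₁, h₂⟩ := hk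
  simp only [IsTurn, ne_eq, Prod.ext_iff, Prod.fst_add, Prod.snd_add, abs_le, not_and] at *
  rcases gridGraph_adj_cases h with ⟨_ | _, _⟩ | ⟨_, _ | _⟩ <;>
    rcases gridGraph_adj_cases h' with ⟨_ | _, _⟩ | ⟨_, _ | _⟩ <;> omega

lemma kingGraph_adj_add_add (ha : a ∈ board k k) (hb : b ∈ board k k)
    (hc : c ∈ board k k) (hd : d ∈ board k k) (hne : a + b ≠ c + d)
    (h₁ : |a.1 + b.1 - (c.1 + d.1)| ≤ 1) (h₂ : |a.2 + b.2 - (c.2 + d.2)| ≤ 1) :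
    (kingGraph (2 * k - 1)).Adj (a + b) (c + d) := by
  obtain ⟨_, _, _, _⟩ := ha
  obtain ⟨_, _, _, _⟩ := hb
  obtain ⟨_, _, _, _⟩ := hc
  obtain ⟨_, _, _, _⟩ := hd
  refine ⟨hne, ?_, ?_, h₁, h₂⟩ <;> refine ⟨?_, ?_, ?_, ?_⟩ <;>
    simp only [Prod.fst_add, Prod.snd_add] <;> omega

lemma kingAdj_double_add (h : (gridGraph k k).Adj a c) :
    (kingGraph (2 * k - 1)).Adj (2 • a) (a + c) := by
  rw [two_nsmul]
  have := gridGraph_adj_cases h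
  refine kingGraph_adj_add_add h.1 h.1 h.1 h.2.1 ?_ ?_ ?_ <;>
    simp only [ne_eq, Prod.ext_iff, Prod.fst_add, Prod.snd_add, abs_le] <;> omega

lemma kingAdj_add_double (h : (gridGraph k k).Adj a c) :
    (kingGraph (2 * k - 1)).Adj (a + c) (2 • c) :=
  add_comm c a ▸ (kingAdj_double_add h.symm).symm

lemma kingAdj_add_add (h₁ : (gridGraph k k).Adj a c) (h₂ : (gridGraph k k).Adj c d)
    (ht : IsTurn a c d) : (kingGraph (2 * k - 1)).Adj (a + c) (c + d) := by
  have := gridGraph_adj_cases h₁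
  have := gridGraph_adj_cases h₂
  unfold IsTurn at ht
  refine kingGraph_adj_add_add h₁.1 h₁.2.1 h₂.1 h₂.2.1 ?_ ?_ ?_ <;>
    simp only [ne_eq, Prod.ext_iff, Prod.fst_add, Prod.snd_add, abs_le] <;> omega

def turnsOf : List Cell → List Cell
  | a :: c :: d :: l => (if IsTurn a c d then [c] else []) ++ turnsOf (c :: d :: l)
  | _ => []

lemma mem_turnsOf_iff {l : List Cell} :
    x ∈ turnsOf l ↔ ∃ u v, [u, x, v] <:+: l ∧ IsTurn u x v := by
  fun_induction turnsOf l with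
  | case1 a c d l ih =>
    have hinfix : ∀ u v, [u, x, v] <:+: a :: c :: d :: l ↔
        (u = a ∧ x = c ∧ v = d) ∨ [u, x, v] <:+: c :: d :: l := by
      simp [List.infix_cons_iff (a := a)]
    simp only [List.mem_append, ih, hinfix, or_and_right, exists_or]
    refine or_congr_left ?_
    split_ifs with ht <;> simpa using fun hx : x = c => hx ▸ ht
  | case2 l h =>
    simp only [List.not_mem_nil, false_iff, not_exists, not_and]
    intro u v hl _
    rcases l with _ | ⟨a, _ | ⟨c, _ | ⟨d, l⟩⟩⟩
    all_goals first | exact h _ _ _ _ rfl | simpa using hl.length_le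

lemma turnsOf_sublist_tail (l : List Cell) : (turnsOf l).Sublist l.tail := by
  fun_induction turnsOf l with
  | case1 a c d l ih =>
    split_ifs
    · exact ih.cons_cons c
    · exact ih.cons c
  | case2 => exact List.nil_sublist _

lemma turnsAt_iff_mem_turnsOf {G : SimpleGraph Cell} {p : G.Walk a b} (hp : p.IsPath) :
    TurnsAt p x ↔ x ∈ turnsOf p.support := by
  rw [mem_turnsOf_iff]
  constructor
  · rintro ⟨u, v, huv, hu, hv, ht⟩
    rcases hp.triple_infix_support hu hv huv with h | h
    · exact ⟨u, v, h, ht⟩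
    · exact ⟨v, u, h, isTurn_comm.1 ht⟩
  · rintro ⟨u, v, h, ht⟩
    have huv : u ≠ v := by
      have := h.nodup hp.support_nodup
      simp_all
    refine ⟨u, v, huv, infix_support_iff_mem_edges.1 (.inl ?_),
      infix_support_iff_mem_edges.1 (.inl ?_), ht⟩
    · exact (List.infix_append [] [u, x] [v]).trans h
    · exact (List.infix_append [u] [x, v] []).trans h

lemma turnCount_eq_length_turnsOf {G : SimpleGraph Cell} {p : G.Walk a b} (hp : p.IsPath) :
    turnCount p = (turnsOf p.support).length := by
  have hnodup : (turnsOf p.support).Nodup :=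
    hp.support_nodup.sublist ((turnsOf_sublist_tail _).trans (List.tail_sublist _))
  have hset : {c | TurnsAt p c} = ↑(turnsOf p.support).toFinset := by
    ext c
    simp [turnsAt_iff_mem_turnsOf hp]
  rw [turnCount, hset, Set.ncard_coe_finset, List.toFinset_card_of_nodup hnodup]

/-- The part of `ψ(a—q)` after its first vertex `2a`. The previous cell `a` is carried along to
decide whether `q` turns at its first cell `c`, in which case `2c` is skipped. -/
def psiFrom : ∀ {c b : Cell} (a : Cell), (gridGraph k k).Adj a c → (gridGraph k k).Walk c b →
    (kingGraph (2 * k - 1)).Walk (a + c) (2 • b)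
  | _, _, _, h, .nil => .cons (kingAdj_add_double h) .nil
  | c, _, a, h, @Walk.cons _ _ _ d _ h' q =>
    if ht : IsTurn a c d then .cons (kingAdj_add_add h h' ht) (psiFrom c h' q)
    else .cons (kingAdj_add_double h) (.cons (kingAdj_double_add h') (psiFrom c h' q))

def psi : ∀ {a b : Cell}, (gridGraph k k).Walk a b → (kingGraph (2 * k - 1)).Walk (2 • a) (2 • b)
  | _, _, .nil => .nil
  | _, _, .cons h q => .cons (kingAdj_double_add h) (psiFrom _ h q)

def cornerEdges (u x v : Cell) : List (Sym2 Cell) :=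
  if IsTurn u x v then [s(u + x, x + v)] else [s(u + x, 2 • x), s(2 • x, x + v)]

section psiFrom

variable {h : (gridGraph k k).Adj a c}

lemma edges_psiFrom_cons (h' : (gridGraph k k).Adj c d) (q : (gridGraph k k).Walk d b) :
    (psiFrom a h (.cons h' q)).edges = cornerEdges a c d ++ (psiFrom c h' q).edges := by
  simp only [psiFrom, cornerEdges]
  split_ifs <;> rfl

lemma support_psiFrom_cons (h' : (gridGraph k k).Adj c d) (q : (gridGraph k k).Walk d b) :
    (psiFrom a h (.cons h' q)).support =
      (a + c) :: ((if IsTurn a c d then [] else [2 • c]) ++ (psiFrom c h' q).support) := by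
  simp only [psiFrom]
  split_ifs <;> rfl

lemma turnsOf_cons_support (h' : (gridGraph k k).Adj c d) (q : (gridGraph k k).Walk d b) :
    turnsOf (a :: (Walk.cons h' q).support) =
      (if IsTurn a c d then [c] else []) ++ turnsOf (c :: q.support) := by
  rw [support_cons, ← q.cons_tail_support]
  rfl

lemma length_psiFrom (q : (gridGraph k k).Walk c b) :
    (psiFrom a h q).length + (turnsOf (a :: q.support)).length = 2 * q.length + 1 := by
  induction q generalizing a with
  | nil => rfl
  | cons h' q ih =>
    have := @ih _ h'
    rw [turnsOf_cons_support]
    simp only [psiFrom]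
    split_ifs <;> simp <;> omega

lemma length_psi (p : (gridGraph k k).Walk a b) :
    (psi p).length + (turnsOf p.support).length = 2 * p.length := by
  cases p with
  | nil => rfl
  | cons h q =>
    have := length_psiFrom (h := h) q
    simp only [psi, length_cons, support_cons]
    omega

lemma cornerEdges_subset_edges_psiFrom (q : (gridGraph k k).Walk c b)
    (hi : [u, x, v] <:+: a :: q.support) : cornerEdges u x v ⊆ (psiFrom a h q).edges := by
  induction q generalizing a with
  | nil => simpa using hi.length_le
  | cons h' q ih =>
    rw [edges_psiFrom_cons]
    rw [support_cons, List.infix_cons_iff] at hi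
    rcases hi with hi | hi
    · rw [← q.cons_tail_support] at hi
      simp only [List.cons_prefix_cons] at hi
      obtain ⟨rfl, rfl, rfl, -⟩ := hi
      exact List.subset_append_left _ _
    · exact fun e he => List.mem_append_right _ (ih hi he)

lemma mem_edges_psiFrom_of_suffix (q : (gridGraph k k).Walk c b)
    (hs : [u, v] <:+ a :: q.support) : s(u + v, 2 • v) ∈ (psiFrom a h q).edges := by
  induction q generalizing a with
  | nil =>
    obtain ⟨rfl, rfl⟩ : u = a ∧ v = _ := by simpa using hs.eq_of_length rfl
    exact List.mem_singleton_self _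
  | cons h' q ih =>
    rw [edges_psiFrom_cons]
    rw [List.suffix_cons_iff] at hs
    rcases hs with hs | hs
    · simpa using congrArg List.length hs
    · exact List.mem_append_right _ (ih hs)

lemma mem_support_psiFrom {w : Cell} {q : (gridGraph k k).Walk c b} (hp : (cons h q).IsPath)
    (hw : w ∈ (psiFrom a h q).support) :
    (∃ u v, s(u, v) ∈ (cons h q).edges ∧ w = u + v) ∨
      ∃ x ∈ q.support, x ∉ turnsOf (a :: q.support) ∧ w = 2 • x := by
  induction q generalizing a with
  | nil =>
    simp only [psiFrom, support_cons, support_nil, List.mem_cons, List.not_mem_nil, or_false] at hw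
    rcases hw with rfl | rfl
    · exact .inl ⟨_, _, List.mem_cons_self .., rfl⟩
    · exact .inr ⟨_, List.mem_singleton_self _, List.not_mem_nil, rfl⟩
  | @cons c d b h' q ih =>
    have hp' := hp.of_cons
    have hc : c ∉ q.support := ((cons_isPath_iff _ _).1 hp').2
    have hc' : c ∉ turnsOf (c :: q.support) := fun h => hc ((turnsOf_sublist_tail _).subset h)
    rw [support_psiFrom_cons] at hw
    rw [turnsOf_cons_support]
    rcases List.mem_cons.1 hw with rfl | hw
    · exact .inl ⟨_, _, List.mem_cons_self .., rfl⟩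
    rcases List.mem_append.1 hw with hw | hw
    · split_ifs at hw with ht
      · exact absurd hw List.not_mem_nil
      rw [List.mem_singleton.1 hw]
      exact .inr ⟨_, start_mem_support _, by simpa [ht] using hc', rfl⟩
    rcases ih hp' hw with ⟨u, v, he, rfl⟩ | ⟨x, hx, hxt, rfl⟩
    · exact .inl ⟨u, v, List.mem_cons_of_mem _ he, rfl⟩
    · refine .inr ⟨x, List.mem_cons_of_mem _ hx, ?_, rfl⟩
      have : x ≠ c := fun hxc => hc (hxc ▸ hx)
      split_ifs <;> simp [this, hxt]

lemma support_psiFrom_nodup {q : (gridGraph k k).Walk c b} (hp : (cons h q).IsPath) :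
    (psiFrom a h q).support.Nodup := by
  induction q generalizing a with
  | nil => simpa [psiFrom] using (double_ne_add h).symm
  | @cons c d b h' q ih =>
    have hp' := hp.of_cons
    have ha : a ∉ (cons h' q).support := ((cons_isPath_iff _ _).1 hp).2
    have hc : c ∉ q.support := ((cons_isPath_iff _ _).1 hp').2
    have hac : a + c ∉ (psiFrom c h' q).support := by
      intro hw
      rcases mem_support_psiFrom hp' hw with ⟨u, v, he, heq⟩ | ⟨x, -, -, heq⟩
      · rw [← sym2_eq_of_add_eq h ((cons h' q).adj_of_mem_edges he) heq] at he
        exact ha ((cons h' q).fst_mem_support_of_mem_edges he)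
      · exact double_ne_add h heq.symm
    have hcc : 2 • c ∉ (psiFrom c h' q).support := by
      intro hw
      rcases mem_support_psiFrom hp' hw with ⟨u, v, he, heq⟩ | ⟨x, hx, -, heq⟩
      · exact double_ne_add ((cons h' q).adj_of_mem_edges he) heq
      · exact hc (double_injective heq ▸ hx)
    rw [support_psiFrom_cons]
    split_ifs
    · exact List.nodup_cons.2 ⟨hac, ih hp'⟩
    · have hne : a + c ≠ 2 • c := (double_ne_add h).symm
      simp only [List.singleton_append, List.nodup_cons, List.mem_cons]
      exact ⟨not_or.2 ⟨hne, hac⟩, hcc, ih hp'⟩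

end psiFrom

section psi

variable {p : (gridGraph k k).Walk a b}

lemma cornerEdges_subset_edges_psi (hi : [u, x, v] <:+: p.support) :
    cornerEdges u x v ⊆ (psi p).edges := by
  cases p with
  | nil => simpa using hi.length_le
  | cons h q =>
    exact fun e he => List.mem_cons_of_mem _ (cornerEdges_subset_edges_psiFrom q hi he)

lemma mem_edges_psi_of_prefix (hi : [u, v] <+: p.support) : s(2 • u, u + v) ∈ (psi p).edges := by
  cases p with
  | nil => simpa using hi.length_le
  | cons h q =>
    rw [support_cons, ← q.cons_tail_support] at hi
    simp only [List.cons_prefix_cons] at hi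
    obtain ⟨rfl, rfl, -⟩ := hi
    exact List.mem_cons_self ..

lemma mem_edges_psi_of_suffix (hs : [u, v] <:+ p.support) : s(u + v, 2 • v) ∈ (psi p).edges := by
  cases p with
  | nil => simpa using hs.length_le
  | cons h q => exact List.mem_cons_of_mem _ (mem_edges_psiFrom_of_suffix q hs)

lemma double_add_mem_edges_psi (he : s(c, v) ∈ p.edges) (hc : c ∉ turnsOf p.support) :
    s(2 • c, c + v) ∈ (psi p).edges := by
  have not_turn : ∀ {u w}, [u, c, w] <:+: p.support → ¬ IsTurn u c w :=
    fun hi ht => hc (mem_turnsOf_iff.2 ⟨_, _, hi, ht⟩)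
  rcases infix_support_iff_mem_edges.2 he with hi | hi
  · rcases hi.prefix_or_infix_cons with hi | ⟨u, hi⟩
    · exact mem_edges_psi_of_prefix hi
    · apply cornerEdges_subset_edges_psi hi
      simp [cornerEdges, not_turn hi]
  · rw [Sym2.eq_swap, add_comm]
    rcases hi.suffix_or_infix_concat with hi | ⟨w, hi⟩
    · exact mem_edges_psi_of_suffix hi
    · apply cornerEdges_subset_edges_psi hi
      simp [cornerEdges, not_turn hi]

lemma add_add_mem_edges_psi (hp : p.IsPath) (hx : s(x, c) ∈ p.edges) (hy : s(c, y) ∈ p.edges)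
    (hxy : x ≠ y) (ht : IsTurn x c y) : s(x + c, c + y) ∈ (psi p).edges := by
  rcases hp.triple_infix_support hx hy hxy with hi | hi
  · apply cornerEdges_subset_edges_psi hi
    simp [cornerEdges, ht]
  · rw [Sym2.eq_swap, add_comm x, add_comm c]
    apply cornerEdges_subset_edges_psi hi
    simp [cornerEdges, isTurn_comm.1 ht]

lemma add_mem_support_psi (he : s(u, v) ∈ p.edges) : u + v ∈ (psi p).support := by
  wlog hi : [u, v] <:+: p.support generalizing u v
  · rw [add_comm]
    exact this (Sym2.eq_swap ▸ he) ((infix_support_iff_mem_edges.2 he).resolve_left hi)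
  rcases hi.suffix_or_infix_concat with hi | ⟨w, hi⟩
  · exact fst_mem_support_of_mem_edges _ (mem_edges_psi_of_suffix hi)
  · have hsub := cornerEdges_subset_edges_psi hi
    unfold cornerEdges at hsub
    split_ifs at hsub
    · exact fst_mem_support_of_mem_edges _ (hsub (List.mem_singleton_self _))
    · exact fst_mem_support_of_mem_edges _ (hsub (List.mem_cons_self ..))

lemma double_mem_support_psi (hc : c ∈ p.support) (hnt : c ∉ turnsOf p.support) :
    2 • c ∈ (psi p).support := by
  rw [← p.cons_tail_support] at hc
  rcases List.eq_or_infix_of_mem_cons hc with rfl | ⟨u, hi⟩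
  · exact start_mem_support _
  · rw [p.cons_tail_support] at hi
    exact fst_mem_support_of_mem_edges _
      (double_add_mem_edges_psi (infix_support_iff_mem_edges.1 (.inr hi)) hnt)

lemma mem_support_psi {w : Cell} (hp : p.IsPath) (hw : w ∈ (psi p).support) :
    (∃ u v, s(u, v) ∈ p.edges ∧ w = u + v) ∨
      ∃ x ∈ p.support, x ∉ turnsOf p.support ∧ w = 2 • x := by
  cases p with
  | nil =>
    simp only [psi, support_nil, List.mem_singleton] at hw
    exact .inr ⟨_, List.mem_singleton_self _, List.not_mem_nil, hw⟩
  | cons h q =>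
    rcases List.mem_cons.1 hw with rfl | hw
    · refine .inr ⟨_, start_mem_support _, fun ha => ?_, rfl⟩
      exact ((cons_isPath_iff _ _).1 hp).2 ((turnsOf_sublist_tail _).subset ha)
    rcases mem_support_psiFrom hp hw with h | ⟨x, hx, hnt, rfl⟩
    · exact .inl h
    · exact .inr ⟨x, List.mem_cons_of_mem _ hx, hnt, rfl⟩

lemma isPath_psi (hp : p.IsPath) : (psi p).IsPath := by
  rw [isPath_def]
  cases p with
  | nil => simp [psi]
  | cons h q =>
    refine List.nodup_cons.2 ⟨fun hw => ?_, support_psiFrom_nodup hp⟩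
    rcases mem_support_psiFrom hp hw with ⟨u, v, he, heq⟩ | ⟨x, hx, -, heq⟩
    · exact double_ne_add ((cons h q).adj_of_mem_edges he) heq
    · exact ((cons_isPath_iff _ _).1 hp).2 (double_injective heq ▸ hx)

lemma double_mem_edges_psi_of_kingAdj (he : s(u, v) ∈ p.edges) (hx : x ∉ turnsOf p.support)
    (hadj : (kingGraph n).Adj (2 • x) (u + v)) : s(2 • x, u + v) ∈ (psi p).edges := by
  rcases eq_or_eq_of_kingAdj_double_add (p.adj_of_mem_edges he) hadj with rfl | rfl
  · exact double_add_mem_edges_psi he hx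
  · rw [Sym2.eq_swap] at he
    rw [add_comm]
    exact double_add_mem_edges_psi he hx

lemma add_mem_edges_psi_of_kingAdj (hp : p.IsPath) (he : s(x, y) ∈ p.edges)
    (he' : s(x', y') ∈ p.edges) (hadj : (kingGraph n).Adj (x + y) (x' + y')) :
    s(x + y, x' + y') ∈ (psi p).edges := by
  have he_swap : s(y, x) ∈ p.edges := by rwa [Sym2.eq_swap]
  have he_swap' : s(y', x') ∈ p.edges := by rwa [Sym2.eq_swap]
  rcases kingAdj_add_add_cases (p.adj_of_mem_edges he) (p.adj_of_mem_edges he') hadj with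
    ⟨rfl, hne, ht⟩ | ⟨rfl, hne, ht⟩ | ⟨rfl, hne, ht⟩ | ⟨rfl, hne, ht⟩
  · rw [add_comm x y]
    exact add_add_mem_edges_psi hp he_swap he' hne ht
  · rw [add_comm x y, add_comm x' x]
    exact add_add_mem_edges_psi hp he_swap he_swap' hne ht
  · exact add_add_mem_edges_psi hp he he' hne ht
  · rw [add_comm x' y]
    exact add_add_mem_edges_psi hp he he_swap' hne ht

lemma isSnake_psi (hp : p.IsPath) : IsSnake (kingGraph (2 * k - 1)) (psi p) := by
  refine ⟨isPath_psi hp, fun w hw w' hw' hadj => ?_⟩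
  rcases mem_support_psi hp hw with ⟨u, v, he, rfl⟩ | ⟨x, -, hx, rfl⟩ <;>
    rcases mem_support_psi hp hw' with ⟨u', v', he', rfl⟩ | ⟨x', -, hx', rfl⟩
  · exact add_mem_edges_psi_of_kingAdj hp he he' hadj
  · rw [Sym2.eq_swap]
    exact double_mem_edges_psi_of_kingAdj he hx' hadj.symm
  · exact double_mem_edges_psi_of_kingAdj he' hx hadj
  · exact absurd hadj not_kingAdj_double_double

lemma support_psi (hp : p.IsPath) :
    {w | w ∈ (psi p).support} =
      {w | ∃ c ∈ p.support, ¬ TurnsAt p c ∧ w = 2 • c} ∪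
        {w | ∃ u v, s(u, v) ∈ p.edges ∧ w = u + v} := by
  ext w
  simp only [Set.mem_ofPred_eq, Set.mem_union, turnsAt_iff_mem_turnsOf hp]
  constructor
  · intro hw
    exact (mem_support_psi hp hw).symm
  · rintro (⟨c, hc, hnt, rfl⟩ | ⟨u, v, he, rfl⟩)
    · exact double_mem_support_psi hc hnt
    · exact add_mem_support_psi he

end psi

end PsiSnake

lemma ncard_sqBoard (k : ℕ) : (sqBoard k).ncard = k ^ 2 := by
  have : sqBoard k = ↑(Finset.Icc (0 : ℤ) (k - 1) ×ˢ Finset.Icc (0 : ℤ) (k - 1)) := by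
    ext
    simp only [sqBoard, Set.mem_ofPred_eq, Finset.coe_product, Set.mem_prod, Finset.coe_Icc,
      Set.mem_Icc]
    tauto
  rw [this, Set.ncard_coe_finset, Finset.card_product, Int.card_Icc, sub_add_cancel, sub_zero,
    Int.toNat_natCast, sq]

lemma IsHamOn.length_add_one {V : Type*} {G : SimpleGraph V} {S : Set V} {a b : V}
    {p : G.Walk a b} (h : IsHamOn S p) : p.length + 1 = S.ncard := by
  classical
  have : S = ↑p.support.toFinset := by
    ext v
    simp [h.2 v]
  rw [this, Set.ncard_coe_finset, List.toFinset_card_of_nodup h.1.support_nodup,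
    length_support]

open PsiSnake in
theorem psi_snake_general (k n : ℕ) (hn : n = 2 * k - 1)
    {a b : Cell} (rho : (gridGraph k k).Walk a b) (hrho : IsHamOn (sqBoard k) rho) :
    ∃ (a' b' : Cell) (P : (kingGraph n).Walk a' b'),
      IsSnake (kingGraph n) P ∧
      P.length = 2 * (k ^ 2 - 1) - turnCount rho ∧
      {v : Cell | v ∈ P.support} =
        {w : Cell | ∃ c, c ∈ rho.support ∧ ¬ TurnsAt rho c ∧ w = (2 * c.1, 2 * c.2)} ∪
        {w : Cell | ∃ u v : Cell, s(u, v) ∈ rho.edges ∧ w = (u.1 + v.1, u.2 + v.2)} := by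
  subst hn
  refine ⟨_, _, psi rho, isSnake_psi hrho.1, ?_, ?_⟩
  · have hlen := hrho.length_add_one
    have := length_psi rho
    rw [ncard_sqBoard] at hlen
    rw [turnCount_eq_length_turnsOf hrho.1]
    omega
  · rw [support_psi hrho.1]
    simp only [two_nsmul, two_mul]
    rfl

/-- ψ(ρ) (scale up by two, smooth the turns) is an induced path in the
king graph of length 2(k²−1) − t, described here by its length and vertex set. -/
theorem psi_snake (k n : ℕ) (hk : 0 < k) (hn : n = 2 * k - 1)
    {a b : Cell} (rho : (gridGraph k k).Walk a b) (hrho : IsHamOn (sqBoard k) rho) :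
    ∃ (a' b' : Cell) (P : (kingGraph n).Walk a' b'),
      IsSnake (kingGraph n) P ∧
      P.length = 2 * (k ^ 2 - 1) - turnCount rho ∧
      {v : Cell | v ∈ P.support} =
        {w : Cell | ∃ c, c ∈ rho.support ∧ ¬ TurnsAt rho c ∧ w = (2 * c.1, 2 * c.2)} ∪
        {w : Cell | ∃ u v : Cell, s(u, v) ∈ rho.edges ∧ w = (u.1 + v.1, u.2 + v.2)} :=
  psi_snake_general k n hn rho hrho
end

section
/- In a fewest-turn Hamiltonian path ρ of the k×k grid graph which is mostly-horizontal (having exactly one horizontal segment in each row), the distinguished edge a'a'' of any free cycle a'a''b'b'' relative to ρ must be vertical. -/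
/-!
If `a'a''` were horizontal, `b'` and `b''` would be horizontally adjacent cells of one row at
which `ρ` turns without using the edge `b'b''`, so their horizontal path edges point away from
each other. Every maximal straight segment of `ρ` ends at a turn or at an endpoint of `ρ`; in
each row the leftmost and rightmost cells carrying a horizontal path edge are such segment ends,
and in the row of `b'b''` they lie strictly outside `b'` and `b''`. That gives at least `2k + 2`
segment ends, hence at least `2k` turns, more than the `2k - 2` turns of `ρ`.
-/

open SimpleGraph

lemma SimpleGraph.Walk.IsPath.exists_ne_mem_edges {V : Type*} {G : SimpleGraph V} {a b c : V}
    {p : G.Walk a b} (hp : p.IsPath) (hc : c ∈ p.support) (ha : c ≠ a) (hb : c ≠ b) (u : V) :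
    ∃ v, v ≠ u ∧ s(v, c) ∈ p.edges := by
  obtain ⟨i, rfl, hi⟩ := Walk.mem_support_iff_exists_getVert.1 hc
  have hi₀ : i ≠ 0 := by rintro rfl; exact ha p.getVert_zero
  have hil : i < p.length := hi.lt_of_ne (by rintro rfl; exact hb p.getVert_length)
  obtain ⟨v, hv, hvu⟩ := Set.exists_ne_of_one_lt_ncard
    (by rw [hp.ncard_neighborSet_toSubgraph_internal_eq_two hi₀ hil]; norm_num) u
  refine ⟨v, hvu, p.mem_edges_toSubgraph.1 ?_⟩
  rw [Sym2.eq_swap]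
  exact hv

section Turns

variable {G : SimpleGraph Cell} {a b : Cell} (p : G.Walk a b)

def segmentEnds : Set Cell := {c | TurnsAt p c} ∪ {a, b}

lemma segmentEnds_finite : (segmentEnds p).Finite := by
  refine (p.support.toFinset.finite_toSet.subset ?_).union (Set.toFinite _)
  rintro c ⟨u, -, -, hu, -⟩
  simpa using p.snd_mem_support_of_mem_edges hu

lemma ncard_segmentEnds_le : (segmentEnds p).ncard ≤ turnCount p + 2 := by
  have hpair := Set.ncard_insert_le a {b}
  rw [Set.ncard_singleton] at hpair
  exact (Set.ncard_union_le _ _).trans (Nat.add_le_add_left hpair _)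

variable {p}

lemma TurnsAt.exists_horizontal {c : Cell} (h : TurnsAt p c) :
    ∃ w, s(w, c) ∈ p.edges ∧ w.2 = c.2 := by
  obtain ⟨u, v, -, hu, hv, ⟨hu₂, -⟩ | ⟨-, hv₂⟩⟩ := h
  · exact ⟨u, hu, hu₂⟩
  · exact ⟨v, by rwa [Sym2.eq_swap], hv₂⟩

end Turns

lemma gridGraph_adj_cases {m n : ℕ} {u v : Cell} (h : (gridGraph m n).Adj u v) :
    (v.2 = u.2 ∧ (v.1 = u.1 + 1 ∨ v.1 = u.1 - 1)) ∨
      (v.1 = u.1 ∧ (v.2 = u.2 + 1 ∨ v.2 = u.2 - 1)) := by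
  obtain ⟨-, -, h⟩ := h
  rcases abs_cases (u.1 - v.1) with ⟨h₁, _⟩ | ⟨h₁, _⟩ <;>
    rcases abs_cases (u.2 - v.2) with ⟨h₂, _⟩ | ⟨h₂, _⟩ <;> rw [h₁, h₂] at h <;> omega

section Grid

variable {m n : ℕ} {a b : Cell} {p : (gridGraph m n).Walk a b}

lemma turnsAt_of_unique_horizontal (hp : p.IsPath) {c u : Cell} (hu : s(u, c) ∈ p.edges)
    (huc : u.2 = c.2) (huniq : ∀ v, s(v, c) ∈ p.edges → v.2 = c.2 → v = u)
    (ha : c ≠ a) (hb : c ≠ b) : TurnsAt p c := by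
  obtain ⟨v, hvu, hv⟩ := hp.exists_ne_mem_edges (p.snd_mem_support_of_mem_edges hu) ha hb u
  have hv₂ : v.2 ≠ c.2 := fun h => hvu (huniq v hv h)
  have hv₁ : v.1 = c.1 := by
    have := gridGraph_adj_cases (p.adj_of_mem_edges hv)
    omega
  exact ⟨u, v, hvu.symm, hu, by rwa [Sym2.eq_swap], Or.inl ⟨huc, hv₁⟩⟩

lemma exists_row_extremes (hp : p.IsPath) {y x₀ x₁ : ℤ}
    (h : s(((x₀, y) : Cell), ((x₁, y) : Cell)) ∈ p.edges) :
    ∃ xl xr, xl < xr ∧ ((xl, y) : Cell) ∈ segmentEnds p ∧ ((xr, y) : Cell) ∈ segmentEnds p ∧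
      ∀ x x', s(((x, y) : Cell), ((x', y) : Cell)) ∈ p.edges → xl ≤ x ∧ x ≤ xr := by
  set X : ℤ → Prop := fun x => ∃ x', s(((x, y) : Cell), ((x', y) : Cell)) ∈ p.edges
  have hstep : ∀ x x', s(((x, y) : Cell), ((x', y) : Cell)) ∈ p.edges →
      x' = x + 1 ∨ x' = x - 1 := fun x x' hx => by
    have := gridGraph_adj_cases (p.adj_of_mem_edges hx)
    dsimp only at this
    omega
  have hboard : ∀ x, X x → 0 ≤ x ∧ x ≤ (n : ℤ) - 1 := fun x ⟨_, hx⟩ =>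
    ⟨(p.adj_of_mem_edges hx).1.1, (p.adj_of_mem_edges hx).1.2.1⟩
  obtain ⟨xl, hxl, hxl_min⟩ :=
    Int.exists_least_of_bdd ⟨0, fun x hx => (hboard x hx).1⟩ ⟨x₀, x₁, h⟩
  obtain ⟨xr, hxr, hxr_max⟩ :=
    Int.exists_greatest_of_bdd ⟨(n : ℤ) - 1, fun x hx => (hboard x hx).2⟩ ⟨x₀, x₁, h⟩
  -- an extreme cell of the row has a single horizontal path-neighbour
  have hend : ∀ x, X x → (∀ x', X x' → x ≤ x') ∨ (∀ x', X x' → x' ≤ x) →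
      ((x, y) : Cell) ∈ segmentEnds p := by
    rintro x ⟨x', hx'⟩ hside
    by_cases hab : (x, y) = a ∨ (x, y) = b
    · exact Or.inr hab
    obtain ⟨ha, hb⟩ := not_or.1 hab
    refine Or.inl (turnsAt_of_unique_horizontal hp (u := (x', y)) (by rwa [Sym2.eq_swap]) rfl
      ?_ ha hb)
    rintro ⟨v, v₂⟩ hv (hv₂ : v₂ = y)
    subst v₂
    have hvX : X v := ⟨x, hv⟩
    have hx'X : X x' := ⟨x, by rwa [Sym2.eq_swap]⟩
    have := hstep x x' hx'
    have := hstep x v (by rwa [Sym2.eq_swap])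
    rw [Prod.mk.injEq]
    refine ⟨?_, rfl⟩
    rcases hside with hside | hside <;> have := hside v hvX <;> have := hside x' hx'X <;> omega
  refine ⟨xl, xr, ?_, hend xl hxl (Or.inl hxl_min), hend xr hxr (Or.inr hxr_max),
    fun x x' hx => ⟨hxl_min x ⟨x', hx⟩, hxr_max x ⟨x', hx⟩⟩⟩
  have := hstep x₀ x₁ h
  have := hxl_min x₀ ⟨x₁, h⟩
  have := hxr_max x₁ ⟨x₀, by rwa [Sym2.eq_swap]⟩
  have := hxl_min x₁ ⟨x₀, by rwa [Sym2.eq_swap]⟩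
  have := hxr_max x₀ ⟨x₁, h⟩
  omega

lemma four_segmentEnds_of_adjacent_turns (hp : p.IsPath) {c c' : Cell} (hc : TurnsAt p c)
    (hc' : TurnsAt p c') (hcc' : s(c, c') ∉ p.edges) (h₂ : c'.2 = c.2)
    (h₁ : c'.1 = c.1 + 1 ∨ c.1 = c'.1 + 1) :
    ∃ x₁ x₂ x₃ x₄, x₁ < x₂ ∧ x₂ < x₃ ∧ x₃ < x₄ ∧
      ((x₁, c.2) : Cell) ∈ segmentEnds p ∧ ((x₂, c.2) : Cell) ∈ segmentEnds p ∧
      ((x₃, c.2) : Cell) ∈ segmentEnds p ∧ ((x₄, c.2) : Cell) ∈ segmentEnds p := by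
  wlog h₁ : c'.1 = c.1 + 1 generalizing c c'
  · rw [← h₂]
    exact this hc' hc (by rwa [Sym2.eq_swap]) h₂.symm (Or.symm ‹_›) (by omega)
  obtain ⟨x, y⟩ := c
  obtain ⟨x', y'⟩ := c'
  dsimp only at h₁ h₂ ⊢
  subst x' y'
  obtain ⟨⟨w, w₂⟩, hw, hw₂ : w₂ = y⟩ := hc.exists_horizontal
  obtain ⟨⟨w', w₂'⟩, hw', hw₂' : w₂' = y⟩ := hc'.exists_horizontal
  subst w₂ w₂'
  have hw_ne : w ≠ x + 1 := by rintro rfl; exact hcc' (by rwa [Sym2.eq_swap])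
  have hw'_ne : w' ≠ x := by rintro rfl; exact hcc' hw'
  have hw_adj := gridGraph_adj_cases (p.adj_of_mem_edges hw)
  have hw'_adj := gridGraph_adj_cases (p.adj_of_mem_edges hw')
  dsimp only at hw_adj hw'_adj
  obtain ⟨xl, xr, -, hxl, hxr, hbound⟩ := exists_row_extremes hp hw
  have := hbound w x hw
  have := hbound w' (x + 1) hw'
  exact ⟨xl, x, x + 1, xr, by omega, by omega, by omega, hxl, Or.inl hc, Or.inl hc', hxr⟩

end Grid

lemma FreeCycle.adjacent_of_horizontal {k : ℕ} {a b : Cell} {p : (gridGraph k k).Walk a b}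
    {a' a'' b' b'' : Cell} (hf : FreeCycle p a' a'' b' b'') (hne : a'.1 ≠ a''.1) :
    b'.2 = b''.2 ∧ (b'.1 = b''.1 + 1 ∨ b''.1 = b'.1 + 1) := by
  obtain ⟨h₁, h₂, h₃, h₄, he, he₂, -, he₄, -⟩ := hf
  have hb' : b' ≠ a' := by rintro rfl; exact he₂ (by rwa [Sym2.eq_swap])
  have hb'' : b'' ≠ a'' := by rintro rfl; exact he₄ (by rwa [Sym2.eq_swap])
  rw [Ne, Prod.ext_iff] at hb' hb''
  have := gridGraph_adj_cases h₁
  have := gridGraph_adj_cases h₂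
  have := gridGraph_adj_cases h₃
  have := gridGraph_adj_cases h₄
  omega

open Finset in
lemma two_mul_add_two_le_ncard {S : Set Cell} (hS : S.Finite) (k : ℕ)
    (hrows : ∀ y : ℤ, 0 ≤ y → y ≤ (k : ℤ) - 1 → ∃ x₁ x₂, x₁ < x₂ ∧ (x₁, y) ∈ S ∧ (x₂, y) ∈ S)
    {y₀ : ℤ} (hy₀ : 0 ≤ y₀ ∧ y₀ ≤ (k : ℤ) - 1)
    (hfour : ∃ x₁ x₂ x₃ x₄, x₁ < x₂ ∧ x₂ < x₃ ∧ x₃ < x₄ ∧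
      (x₁, y₀) ∈ S ∧ (x₂, y₀) ∈ S ∧ (x₃, y₀) ∈ S ∧ (x₄, y₀) ∈ S) :
    2 * k + 2 ≤ S.ncard := by
  classical
  rw [Set.ncard_eq_toFinset_card S hS]
  set E := hS.toFinset
  have hrow_two : ∀ y ∈ Icc 0 ((k : ℤ) - 1), 2 ≤ #(E.filter (·.2 = y)) := by
    intro y hy
    rw [mem_Icc] at hy
    obtain ⟨x₁, x₂, hlt, h₁, h₂⟩ := hrows y hy.1 hy.2
    calc 2 = #({(x₁, y), (x₂, y)} : Finset Cell) := by
          rw [card_pair]; simp only [ne_eq, Prod.mk.injEq]; omega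
      _ ≤ _ := card_le_card (by intro c; aesop)
  have hrow_four : 4 ≤ #(E.filter (·.2 = y₀)) := by
    obtain ⟨x₁, x₂, x₃, x₄, h₁₂, h₂₃, h₃₄, h₁, h₂, h₃, h₄⟩ := hfour
    calc 4 = #({(x₁, y₀), (x₂, y₀), (x₃, y₀), (x₄, y₀)} : Finset Cell) := by
          rw [card_insert_of_notMem, card_insert_of_notMem, card_pair] <;>
            simp only [ne_eq, mem_insert, mem_singleton, Prod.mk.injEq, and_true, not_or] <;> omega
      _ ≤ _ := card_le_card (by intro c; aesop)
  have hy₀' : y₀ ∈ Icc 0 ((k : ℤ) - 1) := mem_Icc.2 hy₀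
  have hsum : ∑ y ∈ Icc 0 ((k : ℤ) - 1), #(E.filter (·.2 = y)) ≤ #E := by
    rw [sum_card_fiberwise_eq_card_filter]
    exact card_filter_le _ _
  rw [← add_sum_erase _ _ hy₀'] at hsum
  have hrest := card_nsmul_le_sum ((Icc 0 ((k : ℤ) - 1)).erase y₀) _ 2
    fun y hy => hrow_two y (mem_of_mem_erase hy)
  rw [card_erase_of_mem hy₀', Int.card_Icc, smul_eq_mul] at hrest
  omega

/-- in a mostly-horizontal fewest-turn Hamiltonian path of the k×k grid
graph, the distinguished edge of every free cycle is vertical. -/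
theorem free_cycle_vertical (k : ℕ) {a b : Cell} (rho : (gridGraph k k).Walk a b)
    (h1 : IsHamOn (sqBoard k) rho) (h2 : turnCount rho = 2 * k - 2)
    (hmh : ∀ y : ℤ, 0 ≤ y → y ≤ (k : ℤ) - 1 →
      ∃ x : ℤ, s(((x, y) : Cell), ((x + 1, y) : Cell)) ∈ rho.edges)
    (a' a'' b' b'' : Cell) (hf : FreeCycle rho a' a'' b' b'') :
    a'.1 = a''.1 := by
  by_contra hne
  have hp : rho.IsPath := h1.1
  obtain ⟨hrow, hnext⟩ := hf.adjacent_of_horizontal hne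
  obtain ⟨-, -, ⟨-, ⟨-, -, hy⟩, -⟩, -, -, -, hcut, -, -, -, hturn', hturn''⟩ := hf
  have hlower := two_mul_add_two_le_ncard (segmentEnds_finite rho) k
    (fun y hy₀ hy₁ => by
      obtain ⟨x, hx⟩ := hmh y hy₀ hy₁
      obtain ⟨xl, xr, hlt, hxl, hxr, -⟩ := exists_row_extremes hp hx
      exact ⟨xl, xr, hlt, hxl, hxr⟩)
    hy (four_segmentEnds_of_adjacent_turns hp hturn'' hturn' (by rwa [Sym2.eq_swap]) hrow
      hnext)
  have hupper := ncard_segmentEnds_le rho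
  omega
end

section
/- The set S of all cells (x,y) ∈ ℤ² with x ≢ y (mod 3) induces in the infinite grid graph a subgraph in which every vertex has degree at most 2 (a pseudosnake), and S has density 2/3. -/
open SimpleGraph

/-- The infinite grid graph on ℤ². -/
def gridZ : SimpleGraph Cell where
  Adj a b := |a.1 - b.1| + |a.2 - b.2| = 1
  symm := by
    constructor
    intro a b h
    rw [abs_sub_comm b.1 a.1, abs_sub_comm b.2 a.2]
    exact h
  loopless := by constructor; intro a h; simp at h

/-! Stepping to a grid neighbour changes `x - y` by `±1`: right and down raise it, left and up
lower it. A cell with `x - y ≡ 1 (mod 3)` therefore loses its two lowering neighbours, which lie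
on a diagonal `x - y ≡ 0`, and a cell with `x - y ≡ 2` loses its two raising ones. The density
count holds because exactly one residue `r` in `[0, n)` has `r ≡ x (mod n)`. -/

theorem range_filter_dvd_sub_eq_singleton (n : ℕ) (hn : 0 < n) (x : ℤ) :
    (Finset.range n).filter (fun r : ℕ => (n : ℤ) ∣ x - r) = {(x % n).toNat} := by
  have hn' : (0 : ℤ) < n := by exact_mod_cast hn
  have h0 := Int.emod_nonneg x hn'.ne'
  have h1 := Int.emod_lt_of_pos x hn'
  ext r
  rw [Finset.mem_filter, Finset.mem_range, Finset.mem_singleton, ← Int.modEq_iff_dvd,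
    Int.ModEq]
  constructor
  · rintro ⟨hr, h⟩
    rw [Int.emod_eq_of_lt (by positivity) (by exact_mod_cast hr)] at h
    omega
  · rintro rfl
    refine ⟨by omega, ?_⟩
    rw [Int.toNat_of_nonneg h0, Int.emod_emod_of_dvd x dvd_rfl]

theorem card_range_filter_not_dvd_sub (n : ℕ) (hn : 0 < n) (x : ℤ) :
    ((Finset.range n).filter fun r : ℕ => ¬ (n : ℤ) ∣ x - r).card = n - 1 := by
  have h := Finset.card_filter_add_card_filter_not (s := Finset.range n)
    (fun r : ℕ => (n : ℤ) ∣ x - r)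
  rw [range_filter_dvd_sub_eq_singleton n hn, Finset.card_singleton, Finset.card_range] at h
  omega

theorem gridZ_adj_iff {a b : Cell} :
    gridZ.Adj a b ↔
      b = (a.1 + 1, a.2) ∨ b = (a.1, a.2 - 1) ∨ b = (a.1 - 1, a.2) ∨ b = (a.1, a.2 + 1) := by
  obtain ⟨x, y⟩ := a
  obtain ⟨u, v⟩ := b
  change |x - u| + |y - v| = 1 ↔ _
  simp only [Prod.mk.injEq]
  rcases abs_cases (x - u) with ⟨e1, _⟩ | ⟨e1, _⟩ <;>
    rcases abs_cases (y - v) with ⟨e2, _⟩ | ⟨e2, _⟩ <;> rw [e1, e2] <;> omega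

theorem ncard_le_two_of_subset_pair {α : Type*} {s : Set α} {p q : α} (h : s ⊆ {p, q}) :
    s.ncard ≤ 2 :=
  (Set.ncard_le_ncard h).trans ((Set.ncard_insert_le p {q}).trans (by simp))

theorem exists_pair_superset_gridZ_neighbors_not_dvd_sub (a : Cell)
    (ha : ¬ (3 : ℤ) ∣ a.1 - a.2) :
    ∃ p q : Cell, {b : Cell | ¬ (3 : ℤ) ∣ b.1 - b.2 ∧ gridZ.Adj a b} ⊆ {p, q} := by
  obtain ⟨x, y⟩ := a
  rcases (by omega : (x - y) % 3 = 1 ∨ (x - y) % 3 = 2) with h | h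
  on_goal 1 => refine ⟨(x + 1, y), (x, y - 1), ?_⟩
  on_goal 2 => refine ⟨(x - 1, y), (x, y + 1), ?_⟩
  all_goals
    rintro b ⟨hb, hadj⟩
    rcases gridZ_adj_iff.1 hadj with rfl | rfl | rfl | rfl <;>
      simp only [Set.mem_insert_iff, Set.mem_singleton_iff, Prod.mk.injEq, true_or, or_true]
        at hb ⊢ <;>
      omega

/-- the set of cells (x,y) with x ≢ y (mod 3) is a pseudosnake in the
infinite grid graph, of density 2/3. -/
theorem grid_pseudosnake_two_thirds :
    (∀ a ∈ {a : Cell | ¬ (3 : ℤ) ∣ (a.1 - a.2)},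
      Set.ncard {b : Cell | ¬ (3 : ℤ) ∣ (b.1 - b.2) ∧ gridZ.Adj a b} ≤ 2) ∧
    (∀ x : ℤ, ((Finset.range 3).filter fun r : ℕ => ¬ (3 : ℤ) ∣ (x - (r : ℤ))).card = 2) := by
  refine ⟨fun a ha => ?_, fun x => card_range_filter_not_dvd_sub 3 three_pos x⟩
  obtain ⟨p, q, hpq⟩ := exists_pair_superset_gridZ_neighbors_not_dvd_sub a ha
  exact ncard_le_two_of_subset_pair hpq
end

section
/- Knight graph on a 2×s twine: for s ≥ 2, the knight graph on the board [0,s−1]×{0,1} is the disjoint union of four paths, two spanning ⌊s/2⌋ cells each and two spanning ⌈s/2⌉ cells each. -/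
open SimpleGraph

/-- The 2×s twine board. -/
def twine (s : ℕ) : Set Cell := {a | 0 ≤ a.1 ∧ a.1 ≤ (s : ℤ) - 1 ∧ (a.2 = 0 ∨ a.2 = 1)}

/-- The knight graph on the 2×s twine. -/
def knightTwine (s : ℕ) : SimpleGraph Cell where
  Adj a b := a ∈ twine s ∧ b ∈ twine s ∧
    ((|a.1 - b.1| = 1 ∧ |a.2 - b.2| = 2) ∨ (|a.1 - b.1| = 2 ∧ |a.2 - b.2| = 1))
  symm := by
    constructor
    rintro a b ⟨h1, h2, h3⟩
    refine ⟨h2, h1, ?_⟩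
    rw [abs_sub_comm b.1 a.1, abs_sub_comm b.2 a.2]
    exact h3
  loopless := by constructor; rintro a ⟨-, -, h⟩; simp at h

/-!
On a board of height two a knight move changes the row by one, hence the column by two: the
only moves are `(x, y) ↦ (x + 2, 1 - y)` and its inverse. So every component of the knight graph
is the path obtained by iterating this step from a cell in column `0` or `1` until the board
ends, and the components are the fibres of the step-invariant
`(x mod 2, (y + ⌊x / 2⌋) mod 2)`, which takes four values. The two paths starting in column `0`
have `⌈s / 2⌉` cells, the two starting in column `1` have `⌊s / 2⌋`.
-/

namespace SimpleGraph

variable {V : Type*} (G : SimpleGraph V) (f : V → V)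

def iterateWalk : (n : ℕ) → (c : V) → (∀ i < n, G.Adj (f^[i] c) (f (f^[i] c))) →
    G.Walk c (f^[n] c)
  | 0, _, _ => Walk.nil
  | n + 1, c, h =>
    Walk.cons (h 0 n.succ_pos) (iterateWalk n (f c) fun i hi => h (i + 1) (by omega))

variable {G f} {n : ℕ} {c : V} {h : ∀ i < n, G.Adj (f^[i] c) (f (f^[i] c))}

theorem support_iterateWalk :
    (G.iterateWalk f n c h).support = (List.range (n + 1)).map (f^[·] c) := by
  induction n generalizing c with
  | zero => rfl
  | succ n ih =>
    refine (congrArg (c :: ·) ih).trans ?_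
    rw [List.range_succ_eq_map (n := n + 1), List.map_cons, List.map_map]
    rfl

theorem edges_iterateWalk :
    (G.iterateWalk f n c h).edges = (List.range n).map fun i => s(f^[i] c, f^[i + 1] c) := by
  induction n generalizing c with
  | zero => rfl
  | succ n ih =>
    refine (congrArg (s(c, f c) :: ·) ih).trans ?_
    rw [List.range_succ_eq_map (n := n), List.map_cons, List.map_map]
    rfl

theorem isPath_iterateWalk (hf : Function.Injective (f^[·] c)) :
    (G.iterateWalk f n c h).IsPath := by
  rw [Walk.isPath_def, support_iterateWalk]
  exact List.nodup_range.map hf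

end SimpleGraph

def knightStep (c : Cell) : Cell := (c.1 + 2, 1 - c.2)

theorem knightStep_iterate (c : Cell) (i : ℕ) :
    knightStep^[i] c = (c.1 + 2 * i, if Even i then c.2 else 1 - c.2) := by
  induction i with
  | zero => simp
  | succ i ih =>
    rw [Function.iterate_succ_apply', ih]
    simp only [knightStep, Nat.even_add_one, Prod.ext_iff]
    split_ifs <;> push_cast <;> constructor <;> ring

theorem knightTwine_adj_iff {s : ℕ} {u v : Cell} : (knightTwine s).Adj u v ↔
    u ∈ twine s ∧ v ∈ twine s ∧ (v = knightStep u ∨ u = knightStep v) := by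
  simp only [knightTwine, twine, knightStep, Set.mem_ofPred_eq, Prod.ext_iff,
    abs_eq (show (0 : ℤ) ≤ 1 by norm_num), abs_eq (show (0 : ℤ) ≤ 2 by norm_num)]
  constructor <;> intro h <;> omega

-- A knight step adds one to `⌊x / 2⌋` and flips `y`, so this is invariant.
def knightClass (v : Cell) : Cell := (v.1 % 2, (v.2 + v.1 / 2) % 2)

theorem knightClass_knightStep_iterate (c : Cell) (i : ℕ) :
    knightClass (knightStep^[i] c) = knightClass c := by
  induction i with
  | zero => rfl
  | succ i ih =>
    rw [Function.iterate_succ_apply', ← ih]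
    simp only [knightClass, knightStep, Prod.ext_iff]
    omega

theorem knightStep_iterate_mem_twine {s : ℕ} {c : Cell} (hc : c ∈ twine s) {i : ℕ}
    (hi : c.1 + 2 * i ≤ s - 1) : knightStep^[i] c ∈ twine s := by
  obtain ⟨h0, -, h2⟩ := hc
  rw [knightStep_iterate]
  refine ⟨by dsimp only; omega, hi, ?_⟩
  dsimp only
  split_ifs <;> omega

def twineRay (s : ℕ) (c : Cell) (hc : c ∈ twine s) :
    (knightTwine s).Walk c (knightStep^[((s - 1 - c.1) / 2).toNat] c) :=
  (knightTwine s).iterateWalk knightStep _ c fun i hi => by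
    refine knightTwine_adj_iff.2 ⟨knightStep_iterate_mem_twine hc (by omega), ?_, Or.inl rfl⟩
    rw [← Function.iterate_succ_apply' knightStep]
    exact knightStep_iterate_mem_twine hc (by omega)

section twineRay

variable {s : ℕ} {c : Cell} (hc : c ∈ twine s)

theorem isPath_twineRay : (twineRay s c hc).IsPath := by
  refine isPath_iterateWalk fun i j hij => ?_
  have := congrArg Prod.fst hij
  simp only [knightStep_iterate] at this
  omega

theorem length_support_twineRay :
    (twineRay s c hc).support.length = ((s - 1 - c.1) / 2).toNat + 1 := by
  rw [twineRay, support_iterateWalk, List.length_map, List.length_range]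

theorem mem_support_twineRay {v : Cell} : v ∈ (twineRay s c hc).support ↔
    v ∈ twine s ∧ c.1 ≤ v.1 ∧ knightClass v = knightClass c := by
  have hcs := hc.2.1
  rw [twineRay, support_iterateWalk]
  simp only [List.mem_map, List.mem_range]
  constructor
  · rintro ⟨i, hi, rfl⟩
    refine ⟨knightStep_iterate_mem_twine hc (by omega), ?_, knightClass_knightStep_iterate c i⟩
    rw [knightStep_iterate]
    dsimp only
    omega
  · rintro ⟨⟨-, hvs, hv2⟩, hcv, hcls⟩
    have hc2 := hc.2.2
    simp only [knightClass, Prod.ext_iff] at hcls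
    obtain ⟨i, hi⟩ : ∃ i : ℕ, (i : ℤ) = (v.1 - c.1) / 2 := ⟨_, Int.toNat_of_nonneg (by omega)⟩
    refine ⟨i, by omega, ?_⟩
    rw [knightStep_iterate]
    split_ifs with h <;> rw [Nat.even_iff] at h <;> ext <;> dsimp only <;> omega

theorem mk_knightStep_mem_edges_twineRay {u : Cell} (hu : u ∈ (twineRay s c hc).support)
    (hstep : knightStep u ∈ twine s) : s(u, knightStep u) ∈ (twineRay s c hc).edges := by
  rw [twineRay, support_iterateWalk] at hu
  obtain ⟨i, hi, rfl⟩ := List.mem_map.1 hu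
  rw [← Function.iterate_succ_apply' knightStep, knightStep_iterate] at hstep
  rw [twineRay, edges_iterateWalk, ← Function.iterate_succ_apply' knightStep]
  refine List.mem_map.2 ⟨i, List.mem_range.2 ?_, rfl⟩
  have := hstep.2.1
  dsimp only at this
  omega

theorem disjoint_support_twineRay {c' : Cell} (hc' : c' ∈ twine s)
    (h : knightClass c ≠ knightClass c') :
    (twineRay s c hc).support.Disjoint (twineRay s c' hc').support := by
  intro v hv hv'
  rw [mem_support_twineRay] at hv hv'
  exact h (hv.2.2.symm.trans hv'.2.2)

end twineRay

/-- for s ≥ 2, the knight graph on the 2×s twine is the disjoint union of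
four paths, two on ⌊s/2⌋ cells and two on ⌈s/2⌉ cells. -/
theorem knight_twine_paths (s : ℕ) (hs : 2 ≤ s) :
    ∃ (a1 b1 a2 b2 a3 b3 a4 b4 : Cell)
      (p1 : (knightTwine s).Walk a1 b1) (p2 : (knightTwine s).Walk a2 b2)
      (p3 : (knightTwine s).Walk a3 b3) (p4 : (knightTwine s).Walk a4 b4),
      p1.IsPath ∧ p2.IsPath ∧ p3.IsPath ∧ p4.IsPath ∧
      (∀ v : Cell, v ∈ twine s ↔
        (v ∈ p1.support ∨ v ∈ p2.support ∨ v ∈ p3.support ∨ v ∈ p4.support)) ∧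
      p1.support.Disjoint p2.support ∧ p1.support.Disjoint p3.support ∧
      p1.support.Disjoint p4.support ∧ p2.support.Disjoint p3.support ∧
      p2.support.Disjoint p4.support ∧ p3.support.Disjoint p4.support ∧
      (∀ u v : Cell, (knightTwine s).Adj u v →
        s(u, v) ∈ p1.edges ∨ s(u, v) ∈ p2.edges ∨ s(u, v) ∈ p3.edges ∨ s(u, v) ∈ p4.edges) ∧
      p1.support.length = s / 2 ∧ p2.support.length = s / 2 ∧
      p3.support.length = (s + 1) / 2 ∧ p4.support.length = (s + 1) / 2 := by
  have start_mem (x y : ℤ) (hx : 0 ≤ x ∧ x ≤ 1) (hy : y = 0 ∨ y = 1) : (x, y) ∈ twine s :=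
    ⟨hx.1, by omega, hy⟩
  let p1 := twineRay s (1, 0) (start_mem 1 0 (by norm_num) (by norm_num))
  let p2 := twineRay s (1, 1) (start_mem 1 1 (by norm_num) (by norm_num))
  let p3 := twineRay s (0, 0) (start_mem 0 0 (by norm_num) (by norm_num))
  let p4 := twineRay s (0, 1) (start_mem 0 1 (by norm_num) (by norm_num))
  have hcover (v : Cell) :
      v ∈ twine s ↔ v ∈ p1.support ∨ v ∈ p2.support ∨ v ∈ p3.support ∨ v ∈ p4.support := by
    simp only [p1, p2, p3, p4, mem_support_twineRay, knightClass, twine, Set.mem_ofPred_eq,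
      Prod.ext_iff]
    omega
  have step_mem_edges (u : Cell) (hu : u ∈ twine s) (hstep : knightStep u ∈ twine s) :
      s(u, knightStep u) ∈ p1.edges ∨ s(u, knightStep u) ∈ p2.edges ∨
        s(u, knightStep u) ∈ p3.edges ∨ s(u, knightStep u) ∈ p4.edges := by
    rcases (hcover u).1 hu with h | h | h | h
    exacts [.inl (mk_knightStep_mem_edges_twineRay _ h hstep),
      .inr (.inl (mk_knightStep_mem_edges_twineRay _ h hstep)),
      .inr (.inr (.inl (mk_knightStep_mem_edges_twineRay _ h hstep))),
      .inr (.inr (.inr (mk_knightStep_mem_edges_twineRay _ h hstep)))]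
  have hdisj {c c' : Cell} (hc : c ∈ twine s) (hc' : c' ∈ twine s)
      (h : knightClass c ≠ knightClass c' := by decide) :=
    disjoint_support_twineRay hc hc' h
  refine ⟨_, _, _, _, _, _, _, _, p1, p2, p3, p4, isPath_twineRay _, isPath_twineRay _,
    isPath_twineRay _, isPath_twineRay _, hcover, hdisj _ _, hdisj _ _, hdisj _ _, hdisj _ _,
    hdisj _ _, hdisj _ _, ?_, ?_, ?_, ?_, ?_⟩
  · intro u v huv
    obtain ⟨hu, hv, rfl | rfl⟩ := knightTwine_adj_iff.1 huv
    · exact step_mem_edges u hu hv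
    · rw [Sym2.eq_swap]
      exact step_mem_edges v hv hu
  all_goals rw [length_support_twineRay]; omega
end

section
/- The knight graph on the 16-cell set S = { ε₁(2,1) + ε₂(1,2) + ε₃(−1,2) + ε₄(−2,1) : εᵢ ∈ {0,1} } is isomorphic to the 4-dimensional hypercube graph Q₄, and its maximum pseudosnake (2-independent set) has exactly 9 vertices. -/
open SimpleGraph

/-- The 4-dimensional hypercube graph. -/
def Q4 : SimpleGraph (Fin 4 → Bool) where
  Adj x y := ∃! i, x i ≠ y i
  symm := by
    constructor
    rintro x y ⟨i, hi, hu⟩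
    exact ⟨i, fun h => hi h.symm, fun j hj => hu j fun h => hj h.symm⟩
  loopless := by constructor; rintro x ⟨i, hi, -⟩; exact hi rfl

/-- The 16-cell set S_Tess. -/
def tess : Set Cell :=
  {a | ∃ e : Fin 4 → Bool,
    a = ((if e 0 then 2 else 0) + (if e 1 then 1 else 0) +
           (if e 2 then -1 else 0) + (if e 3 then -2 else 0),
         (if e 0 then 1 else 0) + (if e 1 then 2 else 0) +
           (if e 2 then 2 else 0) + (if e 3 then 1 else 0))}

/-- The knight graph on S_Tess. -/
def knightTess : SimpleGraph {a : Cell // a ∈ tess} where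
  Adj u v := (|u.1.1 - v.1.1| = 1 ∧ |u.1.2 - v.1.2| = 2) ∨
             (|u.1.1 - v.1.1| = 2 ∧ |u.1.2 - v.1.2| = 1)
  symm := by
    constructor
    rintro u v h
    rw [abs_sub_comm v.1.1 u.1.1, abs_sub_comm v.1.2 u.1.2]
    exact h
  loopless := by constructor; rintro u h; simp at h

/-!
The map `e ↦ ∑ eᵢ wᵢ` with `w = (2,1), (1,2), (-1,2), (-2,1)` is injective on `{0,1}⁴`, and two of
the 16 cells it hits are a knight move apart exactly when they differ by a single `wᵢ`; this is
checked by evaluation, so the knight graph on the image is `Q₄`.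

Let `P` be a pseudosnake of `Q₄` with `|P| ≥ 10`. Its complement has at most 6 vertices, so one
class of the bipartition of `Q₄` by parity, say the even one, contains a set `T` of `t ≤ 3` of
them, while at least `t + 2` odd vertices lie in `P`. Each of these has at most 2 of its 4
neighbours in `P`, so at least 2 neighbours in `T`. But at most `t + 1` vertices of `Q₄` have two
neighbours in a set of `t ≤ 3` vertices: two vertices have at most two common neighbours, and
three vertices at pairwise distance two have a common neighbour.
-/

open Finset

namespace SimpleGraph

variable {V W : Type*}

def IsPseudosnake (G : SimpleGraph V) (P : Set V) : Prop :=
  ∀ u ∈ P, {v | v ∈ P ∧ G.Adj u v}.ncard ≤ 2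

def pseudosnakeSizes (G : SimpleGraph V) : Set ℕ :=
  {m | ∃ P : Set V, G.IsPseudosnake P ∧ P.ncard = m}

theorem IsPseudosnake.image_iso {G : SimpleGraph V} {H : SimpleGraph W} (e : G ≃g H) {P : Set V}
    (hP : G.IsPseudosnake P) : H.IsPseudosnake (e '' P) := by
  rintro _ ⟨u, hu, rfl⟩
  have : {v | v ∈ e '' P ∧ H.Adj (e u) v} = e '' {v | v ∈ P ∧ G.Adj u v} := by
    ext w
    constructor
    · rintro ⟨⟨v, hv, rfl⟩, h⟩
      exact ⟨v, ⟨hv, e.map_adj_iff.1 h⟩, rfl⟩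
    · rintro ⟨v, ⟨hv, h⟩, rfl⟩
      exact ⟨⟨v, hv, rfl⟩, e.map_adj_iff.2 h⟩
  rw [this, Set.ncard_image_of_injective _ e.injective]
  exact hP u hu

theorem Iso.pseudosnakeSizes_subset {G : SimpleGraph V} {H : SimpleGraph W} (e : G ≃g H) :
    G.pseudosnakeSizes ⊆ H.pseudosnakeSizes := by
  rintro _ ⟨P, hP, rfl⟩
  exact ⟨e '' P, hP.image_iso e, Set.ncard_image_of_injective _ e.injective⟩

theorem Iso.pseudosnakeSizes_eq {G : SimpleGraph V} {H : SimpleGraph W} (e : G ≃g H) :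
    G.pseudosnakeSizes = H.pseudosnakeSizes :=
  e.pseudosnakeSizes_subset.antisymm e.symm.pseudosnakeSizes_subset

theorem isPseudosnake_coe_iff {G : SimpleGraph V} [DecidableRel G.Adj] (P : Finset V) :
    G.IsPseudosnake P ↔ ∀ u ∈ P, #{v ∈ P | G.Adj u v} ≤ 2 := by
  refine forall₂_congr fun u _ => ?_
  rw [← Set.ncard_coe_finset, coe_filter]
  rfl

end SimpleGraph

theorem Finset.card_filter_add_card_filter_compl {α : Type*} [Fintype α] [DecidableEq α]
    (s : Finset α) (p : α → Prop) [DecidablePred p] :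
    #{x ∈ s | p x} + #{x ∈ sᶜ | p x} = #{x | p x} := by
  rw [← card_union_of_disjoint (disjoint_filter_filter disjoint_compl_right), ← filter_union,
    union_compl]

namespace Q4

theorem adj_iff_hammingDist {x y : Fin 4 → Bool} : Q4.Adj x y ↔ hammingDist x y = 1 := by
  simp only [Q4, hammingDist, card_eq_one, eq_singleton_iff_unique_mem, mem_filter, mem_univ,
    true_and, ExistsUnique]

instance : DecidableRel Q4.Adj := fun _ _ => decidable_of_iff _ adj_iff_hammingDist.symm

def parity (x : Fin 4 → Bool) : Bool := x 0 ^^ x 1 ^^ x 2 ^^ x 3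

theorem card_filter_adj (u : Fin 4 → Bool) : #{v | Q4.Adj u v} = 4 := by
  revert u
  decide

theorem parity_of_adj : ∀ {u v : Fin 4 → Bool}, Q4.Adj u v → parity v = !parity u := by
  decide

theorem card_filter_parity (b : Bool) : #{x | parity x = b} = 8 := by
  revert b
  decide

theorem card_filter_two_le_card_adj_triple_le :
    ∀ a b c : Fin 4 → Bool, #{v | 2 ≤ #{t ∈ {a, b, c} | Q4.Adj v t}} ≤ #{a, b, c} + 1 := by
  decide +kernel

theorem card_filter_two_le_card_adj_le {T : Finset (Fin 4 → Bool)} (hT : #T ≤ 3) :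
    #{v | 2 ≤ #{t ∈ T | Q4.Adj v t}} ≤ #T + 1 := by
  obtain h | h | h | h : #T = 0 ∨ #T = 1 ∨ #T = 2 ∨ #T = 3 := by omega
  · simp [card_eq_zero.1 h]
  · obtain ⟨a, rfl⟩ := card_eq_one.1 h
    simpa using card_filter_two_le_card_adj_triple_le a a a
  · obtain ⟨a, b, -, rfl⟩ := card_eq_two.1 h
    simpa using card_filter_two_le_card_adj_triple_le a a b
  · obtain ⟨a, b, c, -, -, -, rfl⟩ := card_eq_three.1 h
    exact card_filter_two_le_card_adj_triple_le a b c

theorem two_le_card_filter_compl_adj {P : Finset (Fin 4 → Bool)} {u : Fin 4 → Bool}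
    (hu : #{v ∈ P | Q4.Adj u v} ≤ 2) : 2 ≤ #{v ∈ Pᶜ | Q4.Adj u v} := by
  have := P.card_filter_add_card_filter_compl (Q4.Adj u)
  rw [card_filter_adj] at this
  omega

theorem card_le_nine {P : Finset (Fin 4 → Bool)} (hP : ∀ u ∈ P, #{v ∈ P | Q4.Adj u v} ≤ 2) :
    #P ≤ 9 := by
  by_contra! hP10
  have hclass (c : Bool) : #{x ∈ P | parity x = c} + #{x ∈ Pᶜ | parity x = c} = 8 := by
    rw [card_filter_add_card_filter_compl, card_filter_parity]
  have hsplit := card_filter_add_card_filter_not (s := P) (parity · = true)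
  simp only [Bool.not_eq_true] at hsplit
  obtain ⟨b, hb, hPb⟩ : ∃ b, #{x ∈ Pᶜ | parity x = b} ≤ 3 ∧
      #{x ∈ Pᶜ | parity x = b} + 2 ≤ #{x ∈ P | parity x = !b} := by
    have := hclass true
    have := hclass false
    by_cases h : #{x ∈ Pᶜ | parity x = true} ≤ 3
    · exact ⟨true, h, by rw [Bool.not_true]; omega⟩
    · exact ⟨false, by omega, by rw [Bool.not_false]; omega⟩
  have hsub : {x ∈ P | parity x = !b} ⊆
      ({v | 2 ≤ #{t ∈ {x ∈ Pᶜ | parity x = b} | Q4.Adj v t}} : Finset _) := by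
    intro u hu
    rw [mem_filter] at hu
    rw [mem_filter, filter_filter]
    refine ⟨mem_univ u, (two_le_card_filter_compl_adj (hP u hu.1)).trans (card_le_card ?_)⟩
    intro v hv
    rw [mem_filter] at hv ⊢
    exact ⟨hv.1, by rw [parity_of_adj hv.2, hu.2, Bool.not_not], hv.2⟩
  have := (card_le_card hsub).trans (card_filter_two_le_card_adj_le hb)
  omega

theorem isGreatest_pseudosnakeSizes : IsGreatest Q4.pseudosnakeSizes 9 := by
  refine ⟨?_, ?_⟩
  · let P : Finset (Fin 4 → Bool) := {![false, false, false, false], ![true, false, false, false],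
      ![false, true, false, false], ![true, false, true, false], ![false, true, true, false],
      ![true, true, false, true], ![false, false, true, true], ![true, false, true, true],
      ![false, true, true, true]}
    exact ⟨P, (isPseudosnake_coe_iff P).2 (by decide), by rw [Set.ncard_coe_finset]; decide⟩
  · rintro _ ⟨P, hP, rfl⟩
    lift P to Finset (Fin 4 → Bool) using P.toFinite
    rw [Set.ncard_coe_finset]
    exact card_le_nine ((isPseudosnake_coe_iff P).1 hP)

end Q4

def tessCell (e : Fin 4 → Bool) : Cell :=
  ((if e 0 then 2 else 0) + (if e 1 then 1 else 0) + (if e 2 then -1 else 0) +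
      (if e 3 then -2 else 0),
    (if e 0 then 1 else 0) + (if e 1 then 2 else 0) + (if e 2 then 2 else 0) +
      (if e 3 then 1 else 0))

theorem tessCell_injective : Function.Injective tessCell := by
  decide

noncomputable def tessEquiv : (Fin 4 → Bool) ≃ {a : Cell // a ∈ tess} :=
  Equiv.ofBijective (fun e => ⟨tessCell e, e, rfl⟩)
    ⟨fun _ _ h => tessCell_injective (congrArg Subtype.val h),
      fun ⟨_, e, he⟩ => ⟨e, by simp [he, tessCell]⟩⟩

instance : DecidableRel knightTess.Adj := fun _ _ => by
  unfold knightTess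
  infer_instance

theorem knightTess_adj_tessEquiv :
    ∀ x y, knightTess.Adj (tessEquiv x) (tessEquiv y) ↔ Q4.Adj x y := by
  decide

noncomputable def Q4IsoKnightTess : Q4 ≃g knightTess :=
  ⟨tessEquiv, knightTess_adj_tessEquiv _ _⟩

/-- the knight graph on S_Tess is isomorphic to Q₄, and its maximum
pseudosnake has exactly 9 vertices. -/
theorem tess_hypercube :
    Nonempty (Q4 ≃g knightTess) ∧
    IsGreatest {m : ℕ | ∃ P : Set {a : Cell // a ∈ tess},
      (∀ u ∈ P, Set.ncard {v | v ∈ P ∧ knightTess.Adj u v} ≤ 2) ∧ P.ncard = m} 9 := by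
  refine ⟨⟨Q4IsoKnightTess⟩, ?_⟩
  change IsGreatest knightTess.pseudosnakeSizes 9
  rw [← Q4IsoKnightTess.pseudosnakeSizes_eq]
  exact Q4.isGreatest_pseudosnakeSizes
end
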